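/- arXiv:math/0502482 — 10 statements merged into one kernel-verified Lean document; each statement's English description precedes it below -/
import Mathlib

section
/- (Polar decomposition of SU(N+1), part a.) Let N ≥ 1. For every g in SU(N+1) there exist θ ∈ ℝ and matrices k₁, k₂ in SU(N+1), each of the block-diagonal form diag(λ, A) with A ∈ U(N) an N×N unitary matrix and λ = (det A)⁻¹, such that g = k₁ · E(θ) · k₂, where E(θ) is the (N+1)×(N+1) matrix equal to the 2×2 rotation block [[cos θ, −sin θ],[sin θ, cos θ]] in the top-left corner, the identity matrix 1_{N−1} in the bottom-right (N−1)×(N−1) corner, and zeros elsewhere. -/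
/-!
Let `K₀` be the group of matrices `diag((det A)⁻¹, A)`, `A ∈ U(N)`. Write the unit vector `g e₀`
as `(a, w)` and take `cos θ = |a|`, `sin θ = ‖w‖`. If `B ∈ U(N)` sends `‖w‖ e₀` to `w` and
`A = B diag(μ, 1, …, 1)` with `|μ| = 1`, then `k₁ = diag((det A)⁻¹, A)` satisfies
`k₁ E(θ) e₀ = μ (a, w)` as soon as `μ² det B a = |a|`, which a square root solves. The phase `μ`
is `k₂ e₀` for some `k₂ ∈ K₀`, so `u = (k₁ E(θ))⁻¹ g k₂ ∈ SU(N+1)` fixes `e₀`, hence lies in `K₀`,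
and `g = k₁ E(θ) (u k₂⁻¹)`.

`E(θ) ∈ SU(N+1)` because `E(θ) = 1 + U (R(θ) - 1) Uᴴ` for the plane rotation `R(θ)` and the
isometry `U` onto the first two coordinates; this map preserves products and adjoints, and
determinants since `det (1 + X Y) = det (1 + Y X)`.
-/

open Matrix

/-- The block-diagonal matrix `diag(λ, A)` of size `(N+1) × (N+1)`, with `λ` in the
`(0,0)` corner and `A` as the lower-right `N × N` block. -/
def blkDiag {N : ℕ} (lam : ℂ) (A : Matrix (Fin N) (Fin N) ℂ) :
    Matrix (Fin (N + 1)) (Fin (N + 1)) ℂ :=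
  Matrix.of (Fin.cons (Fin.cons lam 0) (fun i => Fin.cons 0 (A i)))

/-- The matrix `E(θ) = exp(θ H)`: the `2 × 2` rotation block
`[[cos θ, −sin θ], [sin θ, cos θ]]` in the top-left corner, the identity in the
bottom-right `(N−1) × (N−1)` corner, and zeros elsewhere. -/
noncomputable def Emat (N : ℕ) (θ : ℝ) : Matrix (Fin (N + 1)) (Fin (N + 1)) ℂ :=
  fun i j =>
    if i = 0 ∧ j = 0 then (Real.cos θ : ℂ)
    else if i = 0 ∧ j = 1 then (-Real.sin θ : ℂ)
    else if i = 1 ∧ j = 0 then (Real.sin θ : ℂ)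
    else if i = 1 ∧ j = 1 then (Real.cos θ : ℂ)
    else if i = j then 1 else 0

section BlockDiagonal

variable {N : ℕ}

@[simp] lemma blkDiag_zero_zero (l : ℂ) (A : Matrix (Fin N) (Fin N) ℂ) :
    blkDiag l A 0 0 = l := rfl

@[simp] lemma blkDiag_zero_succ (l : ℂ) (A : Matrix (Fin N) (Fin N) ℂ) (j : Fin N) :
    blkDiag l A 0 j.succ = 0 := rfl

@[simp] lemma blkDiag_succ_zero (l : ℂ) (A : Matrix (Fin N) (Fin N) ℂ) (i : Fin N) :
    blkDiag l A i.succ 0 = 0 := rfl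

@[simp] lemma blkDiag_succ_succ (l : ℂ) (A : Matrix (Fin N) (Fin N) ℂ) (i j : Fin N) :
    blkDiag l A i.succ j.succ = A i j := rfl

lemma blkDiag_inj {l l' : ℂ} {A A' : Matrix (Fin N) (Fin N) ℂ} :
    blkDiag l A = blkDiag l' A' ↔ l = l' ∧ A = A' := by
  refine ⟨fun h ↦ ⟨congrFun (congrFun h 0) 0, congrArg (submatrix · Fin.succ Fin.succ) h⟩, ?_⟩
  rintro ⟨rfl, rfl⟩
  rfl

lemma blkDiag_mul (l m : ℂ) (A B : Matrix (Fin N) (Fin N) ℂ) :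
    blkDiag l A * blkDiag m B = blkDiag (l * m) (A * B) := by
  ext i j
  cases i using Fin.cases <;> cases j using Fin.cases <;> simp [mul_apply, Fin.sum_univ_succ]

lemma blkDiag_one : blkDiag (1 : ℂ) (1 : Matrix (Fin N) (Fin N) ℂ) = 1 := by
  ext i j
  cases i using Fin.cases <;> cases j using Fin.cases <;>
    simp [one_apply, Fin.succ_ne_zero, (Fin.succ_ne_zero _).symm]

lemma star_blkDiag (l : ℂ) (A : Matrix (Fin N) (Fin N) ℂ) :
    star (blkDiag l A) = blkDiag (star l) (star A) := by
  ext i j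
  cases i using Fin.cases <;> cases j using Fin.cases <;> simp [star_apply]

lemma det_blkDiag (l : ℂ) (A : Matrix (Fin N) (Fin N) ℂ) :
    (blkDiag l A).det = l * A.det := by
  rw [det_succ_row_zero, Fin.sum_univ_succ]
  have : (blkDiag l A).submatrix Fin.succ Fin.succ = A := rfl
  simp [this]

lemma blkDiag_mulVec_cons (l x : ℂ) (A : Matrix (Fin N) (Fin N) ℂ) (y : Fin N → ℂ) :
    blkDiag l A *ᵥ Fin.cons x y = Fin.cons (l * x) (A *ᵥ y) := by
  ext i
  cases i using Fin.cases <;> simp [mulVec, dotProduct, Fin.sum_univ_succ]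

lemma blkDiag_mem_unitaryGroup_iff {l : ℂ} {A : Matrix (Fin N) (Fin N) ℂ} :
    blkDiag l A ∈ unitaryGroup (Fin (N + 1)) ℂ ↔ l ∈ unitary ℂ ∧ A ∈ unitaryGroup (Fin N) ℂ := by
  rw [mem_unitaryGroup_iff', star_blkDiag, blkDiag_mul, ← blkDiag_one, blkDiag_inj,
    Unitary.mem_iff_star_mul_self, mem_unitaryGroup_iff']

end BlockDiagonal

section IsometryExtension

variable {m n R : Type*} [DecidableEq m] [DecidableEq n] [CommRing R] [StarRing R]

lemma conjTranspose_submatrix_one_mul_self [Fintype m] {f : n → m} (hf : Function.Injective f) :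
    ((1 : Matrix m m R).submatrix id f)ᴴ * (1 : Matrix m m R).submatrix id f = 1 := by
  rw [conjTranspose_submatrix, conjTranspose_one, ← submatrix_mul _ _ _ _ _ Function.bijective_id,
    Matrix.one_mul, submatrix_one _ hf]

variable [Fintype n]

/-- `X` acting on the range of the isometry `U`, extended by the identity on its orthogonal
complement. -/
def extendByOne (U : Matrix m n R) (X : Matrix n n R) : Matrix m m R := 1 + U * (X - 1) * Uᴴ

variable {U : Matrix m n R}

lemma extendByOne_one : extendByOne U (1 : Matrix n n R) = 1 := by
  simp [extendByOne]

lemma extendByOne_mul [Fintype m] (hU : Uᴴ * U = 1) (X Y : Matrix n n R) :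
    extendByOne U (X * Y) = extendByOne U X * extendByOne U Y := by
  have key : U * (X - 1) * Uᴴ * (U * (Y - 1) * Uᴴ) = U * ((X - 1) * (Y - 1)) * Uᴴ := by
    simp only [Matrix.mul_assoc, ← Matrix.mul_assoc Uᴴ U, hU, Matrix.one_mul]
  have hXY : X * Y - 1 = (X - 1) + (Y - 1) + (X - 1) * (Y - 1) := by noncomm_ring
  simp only [extendByOne, hXY, Matrix.add_mul, Matrix.mul_add, Matrix.one_mul, Matrix.mul_one, key]
  abel

lemma conjTranspose_extendByOne (X : Matrix n n R) :
    (extendByOne U X)ᴴ = extendByOne U Xᴴ := by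
  simp [extendByOne, Matrix.mul_assoc]

lemma det_extendByOne [Fintype m] (hU : Uᴴ * U = 1) (X : Matrix n n R) :
    (extendByOne U X).det = X.det := by
  rw [extendByOne, Matrix.mul_assoc, det_one_add_mul_comm, Matrix.mul_assoc, hU, Matrix.mul_one,
    add_sub_cancel]

lemma extendByOne_mem_specialUnitaryGroup [Fintype m] (hU : Uᴴ * U = 1) {X : Matrix n n R}
    (hX : X ∈ specialUnitaryGroup n R) : extendByOne U X ∈ specialUnitaryGroup m R := by
  rw [mem_specialUnitaryGroup_iff, mem_unitaryGroup_iff'] at hX ⊢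
  refine ⟨?_, (det_extendByOne hU X).trans hX.2⟩
  rw [star_eq_conjTranspose, conjTranspose_extendByOne, ← extendByOne_mul hU,
    ← star_eq_conjTranspose, hX.1, extendByOne_one]

end IsometryExtension

section Rotation

noncomputable def planeRotation (θ : ℝ) : Matrix (Fin 2) (Fin 2) ℂ :=
  !![Real.cos θ, -Real.sin θ; Real.sin θ, Real.cos θ]

lemma planeRotation_mem_specialUnitaryGroup (θ : ℝ) :
    planeRotation θ ∈ specialUnitaryGroup (Fin 2) ℂ := by
  have h : (Real.cos θ : ℂ) ^ 2 + (Real.sin θ : ℂ) ^ 2 = 1 := by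
    exact_mod_cast Real.cos_sq_add_sin_sq θ
  rw [mem_specialUnitaryGroup_iff, mem_unitaryGroup_iff']
  refine ⟨?_, ?_⟩
  · ext i j
    fin_cases i <;> fin_cases j <;>
      simp [planeRotation, mul_apply, Fin.sum_univ_two, -Complex.ofReal_cos,
        -Complex.ofReal_sin] <;>
      first | ring1 | linear_combination h
  · simp [planeRotation, det_fin_two, -Complex.ofReal_cos, -Complex.ofReal_sin]
    linear_combination h

variable {N : ℕ} [NeZero N]

lemma Emat_eq_extendByOne (θ : ℝ) :
    Emat N θ = extendByOne ((1 : Matrix (Fin (N + 1)) (Fin (N + 1)) ℂ).submatrix id ![0, 1])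
      (planeRotation θ) := by
  ext i j
  simp only [extendByOne, Matrix.add_apply, Matrix.mul_apply, Matrix.sub_apply, Fin.sum_univ_two,
    submatrix_apply, conjTranspose_apply, id, one_apply, planeRotation, of_apply, cons_val_zero,
    cons_val_one]
  by_cases hi0 : i = 0 <;> by_cases hj0 : j = 0 <;> by_cases hi1 : i = 1 <;>
    by_cases hj1 : j = 1 <;> simp_all [Emat]

lemma Emat_mem_specialUnitaryGroup (θ : ℝ) : Emat N θ ∈ specialUnitaryGroup (Fin (N + 1)) ℂ := by
  rw [Emat_eq_extendByOne]
  refine extendByOne_mem_specialUnitaryGroup (conjTranspose_submatrix_one_mul_self ?_)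
    (planeRotation_mem_specialUnitaryGroup θ)
  intro a b
  fin_cases a <;> fin_cases b <;> simp

lemma Emat_mulVec_single_zero (θ : ℝ) :
    Emat N θ *ᵥ Pi.single 0 1 = Fin.cons (Real.cos θ : ℂ) (Pi.single 0 (Real.sin θ : ℂ)) := by
  ext i
  rw [mulVec_single_one, col_apply]
  cases i using Fin.cases with
  | zero => simp [Emat]
  | succ i =>
    rw [Fin.cons_succ]
    rcases eq_or_ne i 0 with rfl | hi
    · simp [Emat]
    · have hi1 : i.succ ≠ 1 := by rwa [← Fin.succ_zero_eq_one', Ne, Fin.succ_inj]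
      simp [Emat, hi, hi1]

end Rotation

section Phases

lemma inv_eq_star_of_mem_unitary {R : Type*} [GroupWithZero R] [StarMul R] {z : R}
    (hz : z ∈ unitary R) : z⁻¹ = star z :=
  inv_eq_of_mul_eq_one_left (Unitary.star_mul_self_of_mem hz)

lemma exists_mem_unitary_sq_mul_eq_norm (z : ℂ) : ∃ μ ∈ unitary ℂ, μ ^ 2 * z = ‖z‖ := by
  refine ⟨Complex.exp (↑(-(z.arg / 2)) * Complex.I), ?_, ?_⟩
  · rw [Unitary.mem_iff_star_mul_self, RCLike.star_def, Complex.conj_mul',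
      Complex.norm_exp_ofReal_mul_I, Complex.ofReal_one, one_pow]
  · nth_rw 2 [← Complex.norm_mul_exp_arg_mul_I z]
    rw [mul_left_comm, ← Complex.exp_nat_mul, ← Complex.exp_add]
    push_cast
    ring_nf
    rw [Complex.exp_zero, mul_one]

variable {ι : Type*} [Fintype ι] [DecidableEq ι]

lemma diagonal_update_one_mem_unitaryGroup (i : ι) {μ : ℂ} (hμ : μ ∈ unitary ℂ) :
    diagonal (Function.update 1 i μ) ∈ unitaryGroup ι ℂ := by
  rw [mem_unitaryGroup_iff', star_eq_conjTranspose, diagonal_conjTranspose, diagonal_mul_diagonal,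
    ← diagonal_one]
  congr 1
  ext j
  rcases eq_or_ne j i with rfl | hj
  · simpa using Unitary.star_mul_self_of_mem hμ
  · simp [hj]

lemma det_diagonal_update_one (i : ι) (μ : ℂ) : (diagonal (Function.update 1 i μ)).det = μ := by
  rw [det_diagonal, Finset.prod_update_of_mem (Finset.mem_univ i)]
  simp

end Phases

section UnitVectors

variable {𝕜 ι : Type*} [RCLike 𝕜] [Fintype ι] [DecidableEq ι]

lemma norm_toLp_mulVec_of_mem_unitaryGroup {U : Matrix ι ι 𝕜} (hU : U ∈ unitaryGroup ι 𝕜)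
    (x : ι → 𝕜) : ‖WithLp.toLp 2 (U *ᵥ x)‖ = ‖WithLp.toLp 2 x‖ := by
  rw [← toEuclideanCLM_toLp]
  exact ContinuousLinearMap.norm_map_of_mem_unitary (Unitary.map_mem _ hU) _

lemma exists_mem_unitaryGroup_mulVec_single (i : ι) (w : EuclideanSpace 𝕜 ι) :
    ∃ B ∈ unitaryGroup ι 𝕜, B *ᵥ Pi.single i (‖w‖ : 𝕜) = w := by
  rcases eq_or_ne w 0 with rfl | hw
  · exact ⟨1, one_mem _, by simp⟩
  have hu : Orthonormal 𝕜 (({i} : Set ι).domRestrict fun _ ↦ (‖w‖⁻¹ : 𝕜) • w) := by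
    simp [Set.domRestrict, norm_smul, hw]
  obtain ⟨b, hb⟩ := hu.exists_orthonormalBasis_extension_of_card_eq (by simp)
  refine ⟨(EuclideanSpace.basisFun ι 𝕜).toBasis.toMatrix b,
    (EuclideanSpace.basisFun ι 𝕜).toMatrix_orthonormalBasis_mem_unitary b, ?_⟩
  ext j
  have : (‖w‖ : 𝕜) ≠ 0 := by simpa using hw
  simp [mulVec_single, Module.Basis.toMatrix_apply, hb i rfl]
  field_simp

lemma norm_sq_zero_add_norm_sq_tail {N : ℕ} (v : EuclideanSpace 𝕜 (Fin (N + 1))) :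
    ‖v 0‖ ^ 2 + ‖WithLp.toLp 2 (Fin.tail v.ofLp)‖ ^ 2 = ‖v‖ ^ 2 := by
  simp [EuclideanSpace.norm_sq_eq, Fin.sum_univ_succ, Fin.tail]

end UnitVectors

section BlockDiagonalSubgroup

variable {N : ℕ}

/-- The group `K₀ = S(U(1) × U(N))`. -/
def blockDiagSU (N : ℕ) : Submonoid (Matrix (Fin (N + 1)) (Fin (N + 1)) ℂ) where
  carrier := {k | ∃ A ∈ unitaryGroup (Fin N) ℂ, k = blkDiag (A.det)⁻¹ A}
  mul_mem' := by
    rintro _ _ ⟨A, hA, rfl⟩ ⟨B, hB, rfl⟩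
    exact ⟨A * B, mul_mem hA hB, by rw [blkDiag_mul, det_mul, mul_inv]⟩
  one_mem' := ⟨1, one_mem _, by rw [det_one, inv_one, blkDiag_one]⟩

lemma blockDiagSU_le_specialUnitaryGroup :
    blockDiagSU N ≤ specialUnitaryGroup (Fin (N + 1)) ℂ := by
  rintro _ ⟨A, hA, rfl⟩
  have hdet := det_of_mem_unitary hA
  rw [mem_specialUnitaryGroup_iff, blkDiag_mem_unitaryGroup_iff, det_blkDiag,
    inv_eq_star_of_mem_unitary hdet, Unitary.star_mul_self_of_mem hdet]
  exact ⟨⟨Unitary.star_mem hdet, hA⟩, rfl⟩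

lemma star_mem_blockDiagSU {k : Matrix (Fin (N + 1)) (Fin (N + 1)) ℂ} (hk : k ∈ blockDiagSU N) :
    star k ∈ blockDiagSU N := by
  obtain ⟨A, hA, rfl⟩ := hk
  refine ⟨star A, Unitary.star_mem hA, ?_⟩
  rw [star_blkDiag, star_eq_conjTranspose, det_conjTranspose, star_inv₀]

lemma mem_blockDiagSU_of_mulVec_single_zero {u : Matrix (Fin (N + 1)) (Fin (N + 1)) ℂ}
    (hu : u ∈ specialUnitaryGroup (Fin (N + 1)) ℂ) (h : u *ᵥ Pi.single 0 1 = Pi.single 0 1) :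
    u ∈ blockDiagSU N := by
  obtain ⟨hU, hdet⟩ := mem_specialUnitaryGroup_iff.mp hu
  have hstar : star u *ᵥ Pi.single 0 1 = Pi.single 0 1 := by
    conv_lhs => rw [← h]
    rw [mulVec_mulVec, Unitary.star_mul_self_of_mem hU, one_mulVec]
  have hcol (i : Fin (N + 1)) : u i 0 = (Pi.single 0 1 : Fin (N + 1) → ℂ) i := by
    rw [← h, mulVec_single_one, col_apply]
  have hrow (j : Fin (N + 1)) : star (u 0 j) = (Pi.single 0 1 : Fin (N + 1) → ℂ) j := by
    rw [← hstar, mulVec_single_one, col_apply, star_apply]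
  have hu_eq : u = blkDiag 1 (u.submatrix Fin.succ Fin.succ) := by
    ext i j
    cases i using Fin.cases <;> cases j using Fin.cases
    · rw [hcol, Pi.single_eq_same, blkDiag_zero_zero]
    · rw [blkDiag_zero_succ, ← star_eq_zero, hrow, Pi.single_eq_of_ne (Fin.succ_ne_zero _)]
    · rw [hcol, Pi.single_eq_of_ne (Fin.succ_ne_zero _), blkDiag_succ_zero]
    · rfl
  rw [hu_eq, blkDiag_mem_unitaryGroup_iff] at hU
  rw [hu_eq, det_blkDiag, one_mul] at hdet
  exact ⟨_, hU.2, by rw [hdet, inv_one]; exact hu_eq⟩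

variable [NeZero N]

lemma exists_mem_blockDiagSU_mulVec_single_zero {μ : ℂ} (hμ : μ ∈ unitary ℂ) :
    ∃ k ∈ blockDiagSU N, k *ᵥ Pi.single 0 1 = μ • Pi.single 0 1 := by
  have hμ' := Unitary.star_mem hμ
  set D : Matrix (Fin N) (Fin N) ℂ := diagonal (Function.update 1 0 (star μ))
  refine ⟨blkDiag (D.det)⁻¹ D, ⟨D, diagonal_update_one_mem_unitaryGroup 0 hμ', rfl⟩, ?_⟩
  rw [det_diagonal_update_one, inv_eq_star_of_mem_unitary hμ', star_star, mulVec_single_one]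
  ext i
  cases i using Fin.cases <;> simp

lemma exists_mem_blockDiagSU_mul_Emat_mulVec_single_zero (v : EuclideanSpace ℂ (Fin (N + 1)))
    (hv : ‖v‖ = 1) :
    ∃ θ : ℝ, ∃ μ ∈ unitary ℂ, ∃ k ∈ blockDiagSU N,
      (k * Emat N θ) *ᵥ Pi.single 0 1 = μ • v.ofLp := by
  set w : EuclideanSpace ℂ (Fin N) := WithLp.toLp 2 (Fin.tail v.ofLp)
  have hvw : ‖v 0‖ ^ 2 + ‖w‖ ^ 2 = 1 := by rw [norm_sq_zero_add_norm_sq_tail, hv, one_pow]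
  obtain ⟨B, hB, hBw⟩ := exists_mem_unitaryGroup_mulVec_single 0 w
  have hd := det_of_mem_unitary hB
  obtain ⟨μ, hμ, hμsq⟩ := exists_mem_unitary_sq_mul_eq_norm (B.det * v 0)
  set A := B * diagonal (Function.update 1 0 μ)
  have hA : A ∈ unitaryGroup (Fin N) ℂ := mul_mem hB (diagonal_update_one_mem_unitaryGroup 0 hμ)
  have hAdet : A.det = B.det * μ := by rw [det_mul, det_diagonal_update_one]
  have hcos : Real.cos (Real.arccos ‖v 0‖) = ‖v 0‖ :=
    Real.cos_arccos (by linarith [norm_nonneg (v 0)]) (by nlinarith [norm_nonneg w])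
  have hsin : Real.sin (Real.arccos ‖v 0‖) = ‖w‖ := by
    rw [Real.sin_arccos, ← hvw, add_sub_cancel_left, Real.sqrt_sq (norm_nonneg _)]
  have hAv : (A.det)⁻¹ * ‖v 0‖ = μ * v 0 := by
    rw [inv_eq_star_of_mem_unitary (hAdet ▸ mul_mem hd hμ), hAdet, star_mul, ← one_mul ‖v 0‖,
      ← CStarRing.norm_of_mem_unitary hd, ← norm_mul, ← hμsq]
    linear_combination (μ * v 0 * star μ * μ) * Unitary.star_mul_self_of_mem hd +
      μ * v 0 * Unitary.star_mul_self_of_mem hμ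
  have hAw : A *ᵥ Pi.single 0 (‖w‖ : ℂ) = μ • w.ofLp := by
    rw [← mulVec_mulVec, diagonal_mulVec_single, Function.update_self, ← smul_eq_mul,
      Pi.single_smul, mulVec_smul]
    exact congrArg (μ • ·) hBw
  refine ⟨Real.arccos ‖v 0‖, μ, hμ, blkDiag (A.det)⁻¹ A, ⟨A, hA, rfl⟩, ?_⟩
  rw [← mulVec_mulVec, Emat_mulVec_single_zero, blkDiag_mulVec_cons, hcos, hsin]
  ext i
  cases i using Fin.cases with
  | zero => simpa using hAv
  | succ j => simpa [mul_comm, w, Fin.tail] using congrFun hAw j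

end BlockDiagonalSubgroup

/-- Polar (Cartan) decomposition of `SU(N+1)`: every `g ∈ SU(N+1)` can be written as
`g = k₁ · E(θ) · k₂` with `k₁ = diag((det A₁)⁻¹, A₁)`, `k₂ = diag((det A₂)⁻¹, A₂)` and
`A₁, A₂ ∈ U(N)`. -/
theorem polar_decomposition_SU (N : ℕ) (hN : 1 ≤ N)
    (g : Matrix (Fin (N + 1)) (Fin (N + 1)) ℂ)
    (hg : g ∈ Matrix.specialUnitaryGroup (Fin (N + 1)) ℂ) :
    ∃ (θ : ℝ) (A₁ A₂ : Matrix (Fin N) (Fin N) ℂ),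
      A₁ ∈ Matrix.unitaryGroup (Fin N) ℂ ∧ A₂ ∈ Matrix.unitaryGroup (Fin N) ℂ ∧
      g = blkDiag (A₁.det)⁻¹ A₁ * Emat N θ * blkDiag (A₂.det)⁻¹ A₂ := by
  have : NeZero N := ⟨Nat.one_le_iff_ne_zero.mp hN⟩
  have hv : ‖WithLp.toLp 2 (g *ᵥ Pi.single 0 1)‖ = 1 := by
    rw [norm_toLp_mulVec_of_mem_unitaryGroup hg.1]
    simp
  obtain ⟨θ, μ, hμ, k₁, hk₁, hk₁θ⟩ := exists_mem_blockDiagSU_mul_Emat_mulVec_single_zero _ hv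
  obtain ⟨k₂, hk₂, hk₂μ⟩ := exists_mem_blockDiagSU_mulVec_single_zero (N := N) hμ
  have hh : k₁ * Emat N θ ∈ specialUnitaryGroup (Fin (N + 1)) ℂ :=
    mul_mem (blockDiagSU_le_specialUnitaryGroup hk₁) (Emat_mem_specialUnitaryGroup θ)
  have hk₂SU := blockDiagSU_le_specialUnitaryGroup hk₂
  have hu : star (k₁ * Emat N θ) * g * k₂ ∈ blockDiagSU N := by
    refine mem_blockDiagSU_of_mulVec_single_zero
      (mul_mem (mul_mem (star ⟨_, hh⟩ : specialUnitaryGroup _ _).2 hg) hk₂SU) ?_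
    rw [← mulVec_mulVec, hk₂μ, ← mulVec_mulVec, mulVec_smul, ← hk₁θ, mulVec_mulVec,
      Unitary.star_mul_self_of_mem hh.1, one_mulVec]
  obtain ⟨A₂, hA₂, hk⟩ := mul_mem hu (star_mem_blockDiagSU hk₂)
  obtain ⟨A₁, hA₁, rfl⟩ := hk₁
  refine ⟨θ, A₁, A₂, hA₁, hA₂, ?_⟩
  rw [← hk, mul_assoc _ k₂, Unitary.mul_star_self_of_mem hk₂SU.1, mul_one, ← mul_assoc,
    Unitary.mul_star_self_of_mem hh.1, one_mul]
end

section
/- (Decomposition of SU(3).) For every g in SU(3) there exist U₁, U₂ ∈ SU(2), μ ∈ ℂ with |μ| = 1, and α ∈ ℝ, such that g = diag(1, U₁) · M(μ, α) · diag(1, U₂), where diag(1, Uᵢ) is the 3×3 block-diagonal matrix with (0,0) entry 1 and lower-right 2×2 block Uᵢ, and M(μ, α) is the 3×3 matrix with rows (μ²cos α, −sin α, 0), (sin α, μ⁻²cos α, 0), (0, 0, 1). -/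
open Matrix

/-- The block-diagonal `3 × 3` matrix `diag(1, U)` with `U` a `2 × 2` block. -/
def blk3 (U : Matrix (Fin 2) (Fin 2) ℂ) : Matrix (Fin 3) (Fin 3) ℂ :=
  Matrix.of (Fin.cons (Fin.cons 1 0) (fun i => Fin.cons 0 (U i)))

/-- The middle factor `M(μ, α)` with rows `(μ²cos α, −sin α, 0)`, `(sin α, μ⁻²cos α, 0)`,
`(0, 0, 1)`. -/
noncomputable def Mmat (μ : ℂ) (α : ℝ) : Matrix (Fin 3) (Fin 3) ℂ :=
  !![μ ^ 2 * (Real.cos α : ℂ), (-Real.sin α : ℂ), 0;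
     (Real.sin α : ℂ), (μ ^ 2)⁻¹ * (Real.cos α : ℂ), 0;
     0, 0, 1]

/-! Left multiplication by a suitable `blk3 V` with `V ∈ SU(2)` rotates the first column of `g`
to `(a, r, 0)` with `r ≥ 0` real and `‖a‖² + r² = 1`. Taking `α = arcsin r` and `μ` a square root
of the phase of `a` makes this the first column of `Mmat μ α`. Then `(Mmat μ α)ᴴ * blk3 V * g` is
special unitary and fixes `e₀`; by unitarity its first row is `e₀` as well, so it equals `blk3 W`
with `W ∈ SU(2)`. -/

namespace Matrix

variable {n α : Type*} [Fintype n] [DecidableEq n] [CommRing α] [StarRing α]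

theorem row_eq_of_col_eq_one_of_mem_unitaryGroup {k : Matrix n n α}
    (hk : k ∈ unitaryGroup n α) {j : n} (hcol : ∀ i, k i j = (1 : Matrix n n α) i j) (i : n) :
    k j i = (1 : Matrix n n α) j i := by
  have h : (star k * k) i j = (star k * (1 : Matrix n n α)) i j := by simp only [mul_apply, hcol]
  rw [mem_unitaryGroup_iff'.mp hk, mul_one, star_apply] at h
  rw [← star_star (k j i), ← h, ← star_apply, star_one]

theorem star_mul_apply_eq_one_apply_of_col_eq {A B : Matrix n n α} (hA : A ∈ unitaryGroup n α)
    {j : n} (hcol : ∀ i, B i j = A i j) (i : n) : (star A * B) i j = (1 : Matrix n n α) i j := by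
  rw [← mem_unitaryGroup_iff'.mp hA, mul_apply, mul_apply]
  simp only [hcol]

theorem star_mem_specialUnitaryGroup {A : Matrix n n α} (hA : A ∈ specialUnitaryGroup n α) :
    star A ∈ specialUnitaryGroup n α :=
  (star ⟨A, hA⟩ : specialUnitaryGroup n α).2

theorem sum_norm_sq_col_of_mem_unitaryGroup {𝕜 : Type*} [RCLike 𝕜] {A : Matrix n n 𝕜}
    (hA : A ∈ unitaryGroup n 𝕜) (j : n) : ∑ i, ‖A i j‖ ^ 2 = 1 := by
  have h := congr_fun (congr_fun (mem_unitaryGroup_iff'.mp hA) j) j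
  simp only [mul_apply, star_apply, RCLike.star_def, RCLike.conj_mul, one_apply_eq] at h
  exact_mod_cast h

theorem mem_specialUnitaryGroup_fin_two {x y : ℂ} (h : ‖x‖ ^ 2 + ‖y‖ ^ 2 = 1) :
    !![star x, star y; -y, x] ∈ specialUnitaryGroup (Fin 2) ℂ := by
  have h' : (‖x‖ ^ 2 + ‖y‖ ^ 2 : ℂ) = 1 := by exact_mod_cast h
  refine mem_specialUnitaryGroup_iff.mpr ⟨mem_unitaryGroup_iff'.mpr ?_, ?_⟩
  · ext i j; fin_cases i <;> fin_cases j <;>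
      simp [mul_apply, Complex.conj_mul'] <;> first | ring1 | linear_combination h'
  · simp [det_fin_two, Complex.conj_mul']; linear_combination h'

end Matrix

lemma blk3_eq (U : Matrix (Fin 2) (Fin 2) ℂ) :
    blk3 U = !![1, 0, 0; 0, U 0 0, U 0 1; 0, U 1 0, U 1 1] := by
  ext i j; fin_cases i <;> fin_cases j <;> rfl

lemma blk3_one : blk3 1 = 1 := by
  rw [blk3_eq, one_fin_two, one_fin_three]; rfl

lemma blk3_mul (U V : Matrix (Fin 2) (Fin 2) ℂ) : blk3 U * blk3 V = blk3 (U * V) := by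
  simp [blk3_eq, mul_apply, Fin.sum_univ_two]

lemma star_blk3 (U : Matrix (Fin 2) (Fin 2) ℂ) : star (blk3 U) = blk3 (star U) := by
  rw [blk3_eq, blk3_eq]
  ext i j; fin_cases i <;> fin_cases j <;> simp

lemma det_blk3 (U : Matrix (Fin 2) (Fin 2) ℂ) : (blk3 U).det = U.det := by
  simp [blk3_eq, det_fin_three, det_fin_two]

lemma blk3_injective : Function.Injective blk3 :=
  fun _ _ h => ext fun i j => congr_fun (congr_fun h i.succ) j.succ

lemma blk3_mem_specialUnitaryGroup_iff {U : Matrix (Fin 2) (Fin 2) ℂ} :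
    blk3 U ∈ specialUnitaryGroup (Fin 3) ℂ ↔ U ∈ specialUnitaryGroup (Fin 2) ℂ := by
  simp only [mem_specialUnitaryGroup_iff, mem_unitaryGroup_iff', star_blk3, blk3_mul, det_blk3,
    ← blk3_one, blk3_injective.eq_iff]

lemma blk3_mul_apply_zero (U : Matrix (Fin 2) (Fin 2) ℂ) (A : Matrix (Fin 3) (Fin 3) ℂ)
    (j : Fin 3) : (blk3 U * A) 0 j = A 0 j := by
  simp [blk3_eq, mul_apply, Fin.sum_univ_three]

lemma blk3_mul_apply_succ (U : Matrix (Fin 2) (Fin 2) ℂ) (A : Matrix (Fin 3) (Fin 3) ℂ)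
    (i : Fin 2) (j : Fin 3) : (blk3 U * A) i.succ j = (U *ᵥ fun k => A k.succ j) i := by
  fin_cases i <;> simp [blk3_eq, mul_apply, mulVec, dotProduct, Fin.sum_univ_three]

lemma eq_blk3_submatrix_of_col_row {k : Matrix (Fin 3) (Fin 3) ℂ}
    (hcol : ∀ i, k i 0 = (1 : Matrix (Fin 3) (Fin 3) ℂ) i 0)
    (hrow : ∀ j, k 0 j = (1 : Matrix (Fin 3) (Fin 3) ℂ) 0 j) :
    k = blk3 (k.submatrix Fin.succ Fin.succ) := by
  rw [blk3_eq]
  ext i j; fin_cases i <;> fin_cases j <;> simp [hcol, hrow]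

lemma exists_mem_specialUnitaryGroup_mulVec_eq (b : Fin 2 → ℂ) :
    ∃ V ∈ specialUnitaryGroup (Fin 2) ℂ, ∃ r : ℝ, 0 ≤ r ∧ V *ᵥ b = ![(r : ℂ), 0] := by
  set r := √(‖b 0‖ ^ 2 + ‖b 1‖ ^ 2)
  have hr2 : r ^ 2 = ‖b 0‖ ^ 2 + ‖b 1‖ ^ 2 := Real.sq_sqrt (by positivity)
  by_cases hr : r = 0
  · have hb : b = 0 := by
      have : ‖b 0‖ ^ 2 + ‖b 1‖ ^ 2 = 0 := by rw [← hr2, hr, sq, zero_mul]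
      ext i; fin_cases i <;> simp_all [add_eq_zero_iff_of_nonneg]
    exact ⟨1, one_mem _, 0, le_rfl, by ext i; fin_cases i <;> simp [hb]⟩
  · refine ⟨_, mem_specialUnitaryGroup_fin_two (x := b 0 / r) (y := b 1 / r) ?_,
      r, Real.sqrt_nonneg _, ?_⟩
    · simp [div_pow, ← add_div, ← hr2, hr]
    · have hr' : (r : ℂ) ≠ 0 := by exact_mod_cast hr
      have hr2' : (r : ℂ) ^ 2 = ‖b 0‖ ^ 2 + ‖b 1‖ ^ 2 := by exact_mod_cast hr2
      ext i; fin_cases i <;> simp [mulVec, dotProduct]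
      · field_simp
        rw [Complex.conj_mul', Complex.conj_mul', hr2']
      · ring

lemma Mmat_mem_specialUnitaryGroup {μ : ℂ} (hμ : ‖μ‖ = 1) (α : ℝ) :
    Mmat μ α ∈ specialUnitaryGroup (Fin 3) ℂ := by
  have hμ2 : ‖μ ^ 2‖ = 1 := by rw [norm_pow, hμ, one_pow]
  have hw : starRingEnd ℂ (μ ^ 2) * μ ^ 2 = 1 := by
    rw [Complex.conj_mul', hμ2]; norm_num
  have hcs : (Real.cos α : ℂ) ^ 2 + (Real.sin α : ℂ) ^ 2 = 1 := by
    exact_mod_cast Real.cos_sq_add_sin_sq α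
  rw [mem_specialUnitaryGroup_iff, mem_unitaryGroup_iff', Mmat, Complex.inv_eq_conj hμ2]
  generalize μ ^ 2 = w at hw ⊢
  constructor
  · ext i j; fin_cases i <;> fin_cases j <;>
      simp [mul_apply, Fin.sum_univ_three, -Complex.ofReal_cos, -Complex.ofReal_sin] <;>
      first | ring1 | linear_combination (Real.cos α : ℂ) ^ 2 * hw + hcs
  · simp [det_fin_three, -Complex.ofReal_cos, -Complex.ofReal_sin]
    linear_combination (Real.cos α : ℂ) ^ 2 * hw + hcs

lemma Mmat_apply_zero (μ : ℂ) (α : ℝ) (i : Fin 3) :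
    Mmat μ α i 0 = ![μ ^ 2 * (Real.cos α : ℂ), (Real.sin α : ℂ), 0] i := by
  fin_cases i <;> rfl

lemma exists_mul_cos_eq_sin_eq {a : ℂ} {r : ℝ} (hr : 0 ≤ r) (h : ‖a‖ ^ 2 + r ^ 2 = 1) :
    ∃ μ : ℂ, ‖μ‖ = 1 ∧ ∃ α : ℝ, μ ^ 2 * (Real.cos α : ℂ) = a ∧ Real.sin α = r := by
  have hr1 : r ≤ 1 := by nlinarith [norm_nonneg a]
  refine ⟨Complex.exp ((a.arg / 2 : ℝ) * Complex.I), Complex.norm_exp_ofReal_mul_I _,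
    Real.arcsin r, ?_, Real.sin_arcsin (by linarith) hr1⟩
  have hcos : Real.cos (Real.arcsin r) = ‖a‖ := by
    rw [Real.cos_arcsin, ← h, add_sub_cancel_right, Real.sqrt_sq (norm_nonneg a)]
  conv_rhs => rw [← Complex.norm_mul_exp_arg_mul_I a]
  rw [hcos, ← Complex.exp_nat_mul, mul_comm]
  push_cast; ring_nf

lemma exists_eq_blk3_of_col_eq_one {k : Matrix (Fin 3) (Fin 3) ℂ}
    (hk : k ∈ specialUnitaryGroup (Fin 3) ℂ)
    (hcol : ∀ i, k i 0 = (1 : Matrix (Fin 3) (Fin 3) ℂ) i 0) :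
    ∃ W ∈ specialUnitaryGroup (Fin 2) ℂ, k = blk3 W := by
  have hk_eq := eq_blk3_submatrix_of_col_row hcol
    (row_eq_of_col_eq_one_of_mem_unitaryGroup (specialUnitaryGroup_le_unitaryGroup hk) hcol)
  exact ⟨_, blk3_mem_specialUnitaryGroup_iff.mp (hk_eq ▸ hk), hk_eq⟩

/-- Decomposition of `SU(3)`: every `g ∈ SU(3)` can be written as
`g = diag(1, U₁) · M(μ, α) · diag(1, U₂)` with `U₁, U₂ ∈ SU(2)`, `|μ| = 1`, `α ∈ ℝ`. -/
theorem decomposition_SU3 (g : Matrix (Fin 3) (Fin 3) ℂ)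
    (hg : g ∈ Matrix.specialUnitaryGroup (Fin 3) ℂ) :
    ∃ (U₁ U₂ : Matrix (Fin 2) (Fin 2) ℂ) (μ : ℂ) (α : ℝ),
      U₁ ∈ Matrix.specialUnitaryGroup (Fin 2) ℂ ∧
      U₂ ∈ Matrix.specialUnitaryGroup (Fin 2) ℂ ∧
      ‖μ‖ = 1 ∧
      g = blk3 U₁ * Mmat μ α * blk3 U₂ := by
  obtain ⟨V, hV, r, hr, hVb⟩ := exists_mem_specialUnitaryGroup_mulVec_eq fun i => g i.succ 0
  set h := blk3 V * g with h_def
  have hh : h ∈ specialUnitaryGroup (Fin 3) ℂ :=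
    mul_mem (blk3_mem_specialUnitaryGroup_iff.mpr hV) hg
  have hcol : ∀ i, h i 0 = ![g 0 0, (r : ℂ), 0] i := by
    intro i; fin_cases i
    · exact blk3_mul_apply_zero V g 0
    · exact (blk3_mul_apply_succ V g 0 0).trans (congr_fun hVb 0)
    · exact (blk3_mul_apply_succ V g 1 0).trans (congr_fun hVb 1)
  have hnorm : ‖g 0 0‖ ^ 2 + r ^ 2 = 1 := by
    simpa [Fin.sum_univ_three, hcol, abs_of_nonneg hr] using
      sum_norm_sq_col_of_mem_unitaryGroup (specialUnitaryGroup_le_unitaryGroup hh) 0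
  obtain ⟨μ, hμ, α, hμα, hα⟩ := exists_mul_cos_eq_sin_eq hr hnorm
  have hM := Mmat_mem_specialUnitaryGroup hμ α
  have hMu := specialUnitaryGroup_le_unitaryGroup hM
  have hMcol (i : Fin 3) : h i 0 = Mmat μ α i 0 := by rw [hcol, Mmat_apply_zero, hμα, hα]
  obtain ⟨W, hW, hk⟩ := exists_eq_blk3_of_col_eq_one
    (mul_mem (star_mem_specialUnitaryGroup hM) hh) (star_mul_apply_eq_one_apply_of_col_eq hMu hMcol)
  refine ⟨star V, W, μ, α, star_mem_specialUnitaryGroup hV, hW, hμ, ?_⟩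
  rw [← hk, h_def, mul_assoc, ← mul_assoc (Mmat μ α), mem_unitaryGroup_iff.mp hMu, one_mul,
    ← mul_assoc, blk3_mul, mem_unitaryGroup_iff'.mp (specialUnitaryGroup_le_unitaryGroup hV),
    blk3_one, one_mul]
end

section
/- Let Ω ⊆ ℂ be open and let P : Ω → Matrix (n×n, ℂ) be twice continuously differentiable (as a map of two real variables) with P(ξ) hermitian for every ξ ∈ Ω. Set K = [∂̄P, P]. Then Kᴴ = −[∂P, P] pointwise, and the conservation-law expression satisfies ∂K − ∂̄(Kᴴ) = 2·[∂∂̄P, P] on Ω. In particular, P satisfies the equation [∂∂̄P, P] = 0 if and only if ∂[∂̄P, P] + ∂̄[∂P, P] = 0. -/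
open Matrix

attribute [local instance] Matrix.frobeniusNormedAddCommGroup Matrix.frobeniusNormedSpace

/-- The Wirtinger derivative `∂F(ξ) = (1/2)(DF(ξ)(1) − i·DF(ξ)(i))`. -/
noncomputable def wd {E : Type*} [NormedAddCommGroup E] [NormedSpace ℂ E]
    (F : ℂ → E) (ξ : ℂ) : E :=
  (2 : ℂ)⁻¹ • (fderiv ℝ F ξ 1 - Complex.I • fderiv ℝ F ξ Complex.I)

/-- The Wirtinger derivative `∂̄F(ξ) = (1/2)(DF(ξ)(1) + i·DF(ξ)(i))`. -/
noncomputable def wdbar {E : Type*} [NormedAddCommGroup E] [NormedSpace ℂ E]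
    (F : ℂ → E) (ξ : ℂ) : E :=
  (2 : ℂ)⁻¹ • (fderiv ℝ F ξ 1 + Complex.I • fderiv ℝ F ξ Complex.I)

/-!
Write `Q = ∂P` and `Q̄ = ∂̄P`. Since `∂̄` and `∂` are exchanged by conjugation, hermiticity of `P`
gives `Q̄ᴴ = Q`, hence `Kᴴ = -[Q, P]`. By the Leibniz rule,
`∂[Q̄, P] + ∂̄[Q, P] = [∂Q̄, P] + [∂̄Q, P] + [Q̄, Q] + [Q, Q̄]`; the last two terms cancel, and
`∂̄∂P = ∂∂̄P` by the symmetry of the second real derivative of a `C²` map.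
-/

attribute [local instance] Matrix.frobeniusNormedRing Matrix.frobeniusNormedAlgebra

open Complex Topology

section NormedSpace

variable {E : Type*} [NormedAddCommGroup E] [NormedSpace ℂ E] {F G : ℂ → E} {ξ : ℂ}

theorem Filter.EventuallyEq.wd_eq (h : F =ᶠ[𝓝 ξ] G) : wd F ξ = wd G ξ := by
  rw [wd, wd, h.fderiv_eq]

theorem Filter.EventuallyEq.wdbar_eq (h : F =ᶠ[𝓝 ξ] G) : wdbar F ξ = wdbar G ξ := by
  rw [wdbar, wdbar, h.fderiv_eq]

theorem wdbar_neg : wdbar (fun z => -F z) ξ = -wdbar F ξ := by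
  simp only [wdbar, fderiv_fun_neg, _root_.neg_apply]
  module

theorem wd_sub (hF : DifferentiableAt ℝ F ξ) (hG : DifferentiableAt ℝ G ξ) :
    wd (fun z => F z - G z) ξ = wd F ξ - wd G ξ := by
  simp only [wd, fderiv_fun_sub hF hG, _root_.sub_apply]
  module

theorem wdbar_sub (hF : DifferentiableAt ℝ F ξ) (hG : DifferentiableAt ℝ G ξ) :
    wdbar (fun z => F z - G z) ξ = wdbar F ξ - wdbar G ξ := by
  simp only [wdbar, fderiv_fun_sub hF hG, _root_.sub_apply]
  module

theorem ContDiffAt.differentiableAt_fderiv (hF : ContDiffAt ℝ 2 F ξ) :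
    DifferentiableAt ℝ (fderiv ℝ F) ξ :=
  (hF.fderiv_right (m := 1) (by norm_num)).differentiableAt one_ne_zero

theorem ContDiffAt.differentiableAt_wd (hF : ContDiffAt ℝ 2 F ξ) :
    DifferentiableAt ℝ (wd F) ξ := by
  have hD := hF.differentiableAt_fderiv
  unfold wd
  fun_prop

theorem ContDiffAt.differentiableAt_wdbar (hF : ContDiffAt ℝ 2 F ξ) :
    DifferentiableAt ℝ (wdbar F) ξ := by
  have hD := hF.differentiableAt_fderiv
  unfold wdbar
  fun_prop

theorem fderiv_wd_apply (hF : DifferentiableAt ℝ (fderiv ℝ F) ξ) (v : ℂ) :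
    fderiv ℝ (wd F) ξ v
      = (2 : ℂ)⁻¹ • (fderiv ℝ (fderiv ℝ F) ξ v 1 - I • fderiv ℝ (fderiv ℝ F) ξ v I) := by
  have h : HasFDerivAt (wd F) _ ξ :=
    ((hF.hasFDerivAt.clm_apply (hasFDerivAt_const 1 ξ)).sub
      ((hF.hasFDerivAt.clm_apply (hasFDerivAt_const I ξ)).const_smul I)).const_smul (2 : ℂ)⁻¹
  rw [h.fderiv]
  simp

theorem fderiv_wdbar_apply (hF : DifferentiableAt ℝ (fderiv ℝ F) ξ) (v : ℂ) :
    fderiv ℝ (wdbar F) ξ v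
      = (2 : ℂ)⁻¹ • (fderiv ℝ (fderiv ℝ F) ξ v 1 + I • fderiv ℝ (fderiv ℝ F) ξ v I) := by
  have h : HasFDerivAt (wdbar F) _ ξ :=
    ((hF.hasFDerivAt.clm_apply (hasFDerivAt_const 1 ξ)).add
      ((hF.hasFDerivAt.clm_apply (hasFDerivAt_const I ξ)).const_smul I)).const_smul (2 : ℂ)⁻¹
  rw [h.fderiv]
  simp

theorem wd_wdbar_eq_wdbar_wd (hF : ContDiffAt ℝ 2 F ξ) :
    wd (wdbar F) ξ = wdbar (wd F) ξ := by
  have hD := hF.differentiableAt_fderiv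
  have hsymm := (hF.isSymmSndFDerivAt (by simp)).eq 1 I
  simp only [wd, wdbar, fderiv_wd_apply hD, fderiv_wdbar_apply hD, hsymm]
  module

end NormedSpace

section Star

variable {E : Type*} [NormedAddCommGroup E] [NormedSpace ℂ E] [StarAddMonoid E] [StarModule ℂ E]
  [ContinuousStar E] {F : ℂ → E} {ξ : ℂ}

theorem star_wdbar : star (wdbar F ξ) = wd (fun z => star (F z)) ξ := by
  simp only [wdbar, wd, fderiv_star, star_smul, star_add, star_inv₀, ContinuousLinearMap.coe_comp,
    Function.comp_apply, ContinuousLinearEquiv.coe_coe, starL'_apply, Complex.star_def, map_ofNat,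
    conj_I, neg_smul, sub_eq_add_neg]

theorem star_wdbar_of_eventually_star_eq (hF : ∀ᶠ z in 𝓝 ξ, star (F z) = F z) :
    star (wdbar F ξ) = wd F ξ :=
  star_wdbar.trans (Filter.EventuallyEq.wd_eq hF)

end Star

section NormedAlgebra

variable {A : Type*} [NormedRing A] [NormedAlgebra ℂ A] {F G P : ℂ → A} {ξ : ℂ}

theorem wd_mul (hF : DifferentiableAt ℝ F ξ) (hG : DifferentiableAt ℝ G ξ) :
    wd (fun z => F z * G z) ξ = wd F ξ * G ξ + F ξ * wd G ξ := by
  simp only [wd, fderiv_fun_mul' hF hG, _root_.add_apply, _root_.smul_apply, smul_eq_mul,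
    op_smul_eq_mul]
  simp only [sub_mul, mul_sub, smul_mul_assoc, mul_smul_comm, smul_sub]
  module

theorem wdbar_mul (hF : DifferentiableAt ℝ F ξ) (hG : DifferentiableAt ℝ G ξ) :
    wdbar (fun z => F z * G z) ξ = wdbar F ξ * G ξ + F ξ * wdbar G ξ := by
  simp only [wdbar, fderiv_fun_mul' hF hG, _root_.add_apply, _root_.smul_apply, smul_eq_mul,
    op_smul_eq_mul]
  simp only [add_mul, mul_add, smul_mul_assoc, mul_smul_comm, smul_add]
  module

theorem wd_commutator_wdbar_add_wdbar_commutator_wd (hP : ContDiffAt ℝ 2 P ξ) :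
    wd (fun z => wdbar P z * P z - P z * wdbar P z) ξ
        + wdbar (fun z => wd P z * P z - P z * wd P z) ξ
      = 2 • (wd (wdbar P) ξ * P ξ - P ξ * wd (wdbar P) ξ) := by
  have hP₁ : DifferentiableAt ℝ P ξ := hP.differentiableAt two_ne_zero
  have hQ := hP.differentiableAt_wd
  have hQbar := hP.differentiableAt_wdbar
  rw [wd_sub (hQbar.fun_mul hP₁) (hP₁.fun_mul hQbar), wdbar_sub (hQ.fun_mul hP₁) (hP₁.fun_mul hQ),
    wd_mul hQbar hP₁, wd_mul hP₁ hQbar, wdbar_mul hQ hP₁, wdbar_mul hP₁ hQ,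
    ← wd_wdbar_eq_wdbar_wd hP, two_nsmul]
  abel

variable [StarRing A] [StarModule ℂ A] [ContinuousStar A]

theorem star_commutator_wdbar (hP : ∀ᶠ z in 𝓝 ξ, star (P z) = P z) :
    star (wdbar P ξ * P ξ - P ξ * wdbar P ξ) = -(wd P ξ * P ξ - P ξ * wd P ξ) := by
  rw [star_sub, star_mul, star_mul, star_wdbar_of_eventually_star_eq hP, hP.self_of_nhds, neg_sub]

end NormedAlgebra

/-- For a twice continuously differentiable hermitian-valued `P` on an open `Ω ⊆ ℂ` and
`K = [∂̄P, P]`: `Kᴴ = −[∂P, P]`, `∂K − ∂̄(Kᴴ) = 2[∂∂̄P, P]`, and `[∂∂̄P, P] = 0` on `Ω`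
iff `∂[∂̄P, P] + ∂̄[∂P, P] = 0` on `Ω`. -/
theorem conservation_law_equiv {n : ℕ} (Ω : Set ℂ) (hΩ : IsOpen Ω)
    (P : ℂ → Matrix (Fin n) (Fin n) ℂ) (hP : ContDiffOn ℝ 2 P Ω)
    (hherm : ∀ ξ ∈ Ω, (P ξ)ᴴ = P ξ)
    (K : ℂ → Matrix (Fin n) (Fin n) ℂ)
    (hK : K = fun ξ => wdbar P ξ * P ξ - P ξ * wdbar P ξ) :
    (∀ ξ ∈ Ω, (K ξ)ᴴ = -(wd P ξ * P ξ - P ξ * wd P ξ)) ∧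
    (∀ ξ ∈ Ω, wd K ξ - wdbar (fun z => (K z)ᴴ) ξ
        = 2 • (wd (fun z => wdbar P z) ξ * P ξ - P ξ * wd (fun z => wdbar P z) ξ)) ∧
    ((∀ ξ ∈ Ω, wd (fun z => wdbar P z) ξ * P ξ - P ξ * wd (fun z => wdbar P z) ξ = 0) ↔
      (∀ ξ ∈ Ω, wd (fun z => wdbar P z * P z - P z * wdbar P z) ξ
          + wdbar (fun z => wd P z * P z - P z * wd P z) ξ = 0)) := by
  subst hK
  have hK_conj : ∀ ξ ∈ Ω,
      (wdbar P ξ * P ξ - P ξ * wdbar P ξ)ᴴ = -(wd P ξ * P ξ - P ξ * wd P ξ) := fun ξ hξ =>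
    star_commutator_wdbar (Filter.eventually_of_mem (hΩ.mem_nhds hξ) hherm)
  have hidentity := fun ξ (hξ : ξ ∈ Ω) =>
    wd_commutator_wdbar_add_wdbar_commutator_wd (hP.contDiffAt (hΩ.mem_nhds hξ))
  refine ⟨hK_conj, fun ξ hξ => ?_, forall₂_congr fun ξ hξ => ?_⟩
  · have hK_conj_near : (fun z => (wdbar P z * P z - P z * wdbar P z)ᴴ)
        =ᶠ[𝓝 ξ] fun z => -(wd P z * P z - P z * wd P z) :=
      Filter.eventually_of_mem (hΩ.mem_nhds hξ) hK_conj
    rw [hK_conj_near.wdbar_eq, wdbar_neg, sub_neg_eq_add, hidentity ξ hξ]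
  · rw [hidentity ξ hξ, ← Nat.cast_smul_eq_nsmul ℂ, smul_eq_zero, or_iff_right (by norm_num)]
end

section
/- Let Ω ⊆ ℂ be open and let W : Ω → ℂ be twice continuously differentiable and satisfy the ℂP¹ sigma model equation ∂∂̄W = (2·conj(W)/(1+|W|²))·∂W·∂̄W on Ω. Then the hermitian projector-valued map P(ξ) := 1₂ − (1/(1+|W(ξ)|²))·[[1, conj(W(ξ))],[W(ξ), |W(ξ)|²]] satisfies [∂∂̄P(ξ), P(ξ)] = 0 for every ξ ∈ Ω. -/
/-!
Write `∂` and `∂̄` as the cases `s = -i` and `s = i` of `F ↦ (DF(1) + s·DF(i))/2`.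
These operators obey the Leibniz and quotient rules, conjugation exchanges them, and on
`C²` maps they commute (symmetry of the second derivative), so `∂∂̄ W̄ = conj (∂∂̄ W)`.
Applying these rules entrywise to `P = (1 + |W|²)⁻¹ [[|W|², -W̄], [-W, 1]]` and eliminating
`∂∂̄ W` with the sigma model equation gives
`∂∂̄ P = (|∂W|² + |∂̄W|²) / (1 + |W|²)² · (1 - 2P)`, which commutes with `P`.
-/

open Matrix Complex

attribute [local instance] Matrix.frobeniusNormedAddCommGroup Matrix.frobeniusNormedSpace

open ComplexConjugate Filter Topology

section Wirtinger

variable {E F : Type*} [NormedAddCommGroup E] [NormedSpace ℂ E]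
  [NormedAddCommGroup F] [NormedSpace ℂ F]

noncomputable def wirtinger (s : ℂ) (f : ℂ → E) (ξ : ℂ) : E :=
  (2 : ℂ)⁻¹ • (fderiv ℝ f ξ 1 + s • fderiv ℝ f ξ I)

lemma wd_eq_wirtinger (f : ℂ → E) : wd f = wirtinger (-I) f := by
  funext ξ
  simp only [wd, wirtinger, neg_smul, sub_eq_add_neg]

lemma wdbar_eq_wirtinger (f : ℂ → E) : wdbar f = wirtinger I f := rfl

variable {s t : ℂ} {f g : ℂ → E} {ξ : ℂ}

lemma Filter.EventuallyEq.wirtinger_eq (h : f =ᶠ[𝓝 ξ] g) :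
    wirtinger s f ξ = wirtinger s g ξ := by
  simp only [wirtinger, h.fderiv_eq]

lemma Filter.EventuallyEq.wirtinger (h : f =ᶠ[𝓝 ξ] g) :
    wirtinger s f =ᶠ[𝓝 ξ] wirtinger s g :=
  h.eventuallyEq_nhds.mono fun _ hz => hz.wirtinger_eq

lemma wirtinger_const (c : E) : wirtinger s (fun _ => c) = fun _ => 0 := by
  funext
  simp [wirtinger]

lemma wirtinger_neg : wirtinger s (fun z => -f z) = fun z => -wirtinger s f z := by
  funext
  simp only [wirtinger, fderiv_fun_neg, _root_.neg_apply]
  module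

lemma wirtinger_const_sub (c : E) :
    wirtinger s (fun z => c - f z) = fun z => -wirtinger s f z := by
  funext
  simp only [wirtinger, fderiv_const_sub, _root_.neg_apply]
  module

lemma wirtinger_const_add (c : E) : wirtinger s (fun z => c + f z) = wirtinger s f := by
  funext
  simp only [wirtinger, fderiv_const_add]

lemma wirtinger_add (hf : DifferentiableAt ℝ f ξ) (hg : DifferentiableAt ℝ g ξ) :
    wirtinger s (fun z => f z + g z) ξ = wirtinger s f ξ + wirtinger s g ξ := by
  simp only [wirtinger, fderiv_fun_add hf hg, _root_.add_apply]
  module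

lemma wirtinger_clm_comp (L : E →L[ℂ] F) (hf : DifferentiableAt ℝ f ξ) :
    wirtinger s (fun z => L (f z)) ξ = L (wirtinger s f ξ) := by
  have h : fderiv ℝ (fun z => L (f z)) ξ = (L.restrictScalars ℝ).comp (fderiv ℝ f ξ) :=
    ((L.restrictScalars ℝ).hasFDerivAt.comp ξ hf.hasFDerivAt).fderiv
  simp [wirtinger, h]

lemma wirtinger_mul {f g : ℂ → ℂ} (hf : DifferentiableAt ℝ f ξ)
    (hg : DifferentiableAt ℝ g ξ) :
    wirtinger s (fun z => f z * g z) ξ = f ξ * wirtinger s g ξ + g ξ * wirtinger s f ξ := by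
  simp only [wirtinger, fderiv_fun_mul hf hg, _root_.add_apply, _root_.smul_apply, smul_eq_mul]
  ring

lemma wirtinger_conj {f : ℂ → ℂ} :
    wirtinger s (fun z => conj (f z)) ξ = conj (wirtinger (conj s) f ξ) := by
  have h : fderiv ℝ (fun z => conj (f z)) ξ = (conjCLE : ℂ →L[ℝ] ℂ).comp (fderiv ℝ f ξ) :=
    conjCLE.comp_fderiv
  simp [wirtinger, h, map_ofNat]

lemma wirtinger_inv {f : ℂ → ℂ} (hf : DifferentiableAt ℝ f ξ) (h0 : f ξ ≠ 0) :
    wirtinger s (fun z => (f z)⁻¹) ξ = -wirtinger s f ξ / f ξ ^ 2 := by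
  have h : fderiv ℝ (fun z => (f z)⁻¹) ξ = (fderiv ℝ Inv.inv (f ξ)).comp (fderiv ℝ f ξ) :=
    fderiv_comp ξ (differentiableAt_inv h0) hf
  simp only [wirtinger, h, fderiv_inv' h0, ContinuousLinearMap.comp_apply, _root_.neg_apply,
    ContinuousLinearMap.mulLeftRight_apply, smul_eq_mul]
  field_simp
  ring

end Wirtinger

section SecondOrder

variable {E F : Type*} [NormedAddCommGroup E] [NormedSpace ℂ E]
  [NormedAddCommGroup F] [NormedSpace ℂ F] {s t : ℂ} {f g : ℂ → E} {ξ : ℂ}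

lemma ContDiffAt.differentiableAt_wirtinger (hf : ContDiffAt ℝ 2 f ξ) :
    DifferentiableAt ℝ (wirtinger s f) ξ := by
  have hf' : DifferentiableAt ℝ (fderiv ℝ f) ξ :=
    (hf.fderiv_right (m := 1) (by norm_num)).differentiableAt (by norm_num)
  unfold wirtinger
  fun_prop

lemma ContDiffAt.eventually_differentiableAt (hf : ContDiffAt ℝ 2 f ξ) :
    ∀ᶠ z in 𝓝 ξ, DifferentiableAt ℝ f z :=
  (hf.eventually (by simp)).mono fun _ hz => hz.differentiableAt (by norm_num)

lemma ContDiffAt.wirtinger_wirtinger_comm (hf : ContDiffAt ℝ 2 f ξ) :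
    wirtinger s (wirtinger t f) ξ = wirtinger t (wirtinger s f) ξ := by
  have hf' : DifferentiableAt ℝ (fderiv ℝ f) ξ :=
    (hf.fderiv_right (m := 1) (by norm_num)).differentiableAt (by norm_num)
  set H := fderiv ℝ (fderiv ℝ f) ξ
  have hsym : H 1 I = H I 1 := hf.isSymmSndFDerivAt (by simp) 1 I
  have hD : ∀ u v, fderiv ℝ (wirtinger u f) ξ v = (2 : ℂ)⁻¹ • (H v 1 + u • H v I) := by
    intro u v
    have h : HasFDerivAt (wirtinger u f) ((2 : ℂ)⁻¹ • (H.flip 1 + u • H.flip I)) ξ := by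
      refine (((hf'.hasFDerivAt.clm_apply (hasFDerivAt_const 1 ξ)).add
        ((hf'.hasFDerivAt.clm_apply (hasFDerivAt_const I ξ)).const_smul u)).const_smul
        (2 : ℂ)⁻¹).congr_fderiv ?_
      simp [H]
    simp [h.fderiv]
  simp only [wirtinger, hD]
  rw [hsym]
  module

lemma ContDiffAt.wirtinger_wirtinger_clm_comp (L : E →L[ℂ] F) (hf : ContDiffAt ℝ 2 f ξ) :
    wirtinger s (wirtinger t (fun z => L (f z))) ξ = L (wirtinger s (wirtinger t f) ξ) := by
  have h : wirtinger t (fun z => L (f z)) =ᶠ[𝓝 ξ] fun z => L (wirtinger t f z) :=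
    hf.eventually_differentiableAt.mono fun _ hz => wirtinger_clm_comp L hz
  rw [h.wirtinger_eq, wirtinger_clm_comp L hf.differentiableAt_wirtinger]

lemma wirtinger_wirtinger_conj {f : ℂ → ℂ} :
    wirtinger s (wirtinger t (fun z => conj (f z))) ξ
      = conj (wirtinger (conj s) (wirtinger (conj t) f) ξ) := by
  have h : wirtinger t (fun z => conj (f z)) = fun z => conj (wirtinger (conj t) f z) := by
    funext z
    exact wirtinger_conj
  rw [h, wirtinger_conj]

lemma wirtinger_wirtinger_mul {f g : ℂ → ℂ} (hf : ContDiffAt ℝ 2 f ξ)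
    (hg : ContDiffAt ℝ 2 g ξ) :
    wirtinger s (wirtinger t (fun z => f z * g z)) ξ
      = f ξ * wirtinger s (wirtinger t g) ξ + wirtinger s f ξ * wirtinger t g ξ
        + wirtinger t f ξ * wirtinger s g ξ + g ξ * wirtinger s (wirtinger t f) ξ := by
  have h : wirtinger t (fun z => f z * g z)
      =ᶠ[𝓝 ξ] fun z => f z * wirtinger t g z + g z * wirtinger t f z :=
    (hf.eventually_differentiableAt.and hg.eventually_differentiableAt).mono
      fun _ hz => wirtinger_mul hz.1 hz.2
  have hf1 := hf.differentiableAt (by norm_num)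
  have hg1 := hg.differentiableAt (by norm_num)
  have hf2 := hf.differentiableAt_wirtinger (s := t)
  have hg2 := hg.differentiableAt_wirtinger (s := t)
  rw [h.wirtinger_eq, wirtinger_add (hf1.fun_mul hg2) (hg1.fun_mul hf2), wirtinger_mul hf1 hg2,
    wirtinger_mul hg1 hf2]
  ring

lemma wirtinger_wirtinger_inv {f : ℂ → ℂ} (hf : ContDiffAt ℝ 2 f ξ) (h0 : f ξ ≠ 0) :
    wirtinger s (wirtinger t (fun z => (f z)⁻¹)) ξ
      = (2 * wirtinger s f ξ * wirtinger t f ξ - f ξ * wirtinger s (wirtinger t f) ξ)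
        / f ξ ^ 3 := by
  have hone : (fun z => f z * (f z)⁻¹) =ᶠ[𝓝 ξ] fun _ => (1 : ℂ) :=
    (hf.continuousAt.eventually_ne h0).mono fun _ hz => mul_inv_cancel₀ hz
  -- differentiate `f * f⁻¹ = 1` twice
  have key :=
    wirtinger_wirtinger_mul (s := s) (t := t) (g := fun z => (f z)⁻¹) hf (hf.inv h0)
  have hf1 := hf.differentiableAt (by norm_num)
  rw [hone.wirtinger.wirtinger_eq, wirtinger_const, wirtinger_const, wirtinger_inv hf1 h0,
    wirtinger_inv hf1 h0] at key
  generalize wirtinger s (wirtinger t fun z => (f z)⁻¹) ξ = D at key ⊢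
  beta_reduce at key
  field_simp at key ⊢
  linear_combination -key

end SecondOrder

section Matrix

variable {m n : Type*} [Fintype m] [Fintype n]

lemma contDiffAt_matrix_iff {𝕜 X α : Type*} [NontriviallyNormedField 𝕜] [CompleteSpace 𝕜]
    [NormedAddCommGroup X] [NormedSpace 𝕜 X] [NormedAddCommGroup α] [NormedSpace 𝕜 α]
    [FiniteDimensional 𝕜 α] {k : WithTop ℕ∞} {F : X → Matrix m n α} {x : X} :
    ContDiffAt 𝕜 k F x ↔ ∀ i j, ContDiffAt 𝕜 k (fun z => F z i j) x := by
  let e := ((Matrix.ofLinearEquiv 𝕜).symm :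
    Matrix m n α ≃ₗ[𝕜] (m → n → α)).toContinuousLinearEquiv
  rw [← e.comp_contDiffAt_iff, contDiffAt_pi]
  exact forall_congr' fun i => contDiffAt_pi

lemma ContDiffAt.wirtinger_wirtinger_apply {s t ξ : ℂ} {F : ℂ → Matrix m n ℂ}
    (hF : ContDiffAt ℝ 2 F ξ) (i : m) (j : n) :
    wirtinger s (wirtinger t F) ξ i j = wirtinger s (wirtinger t fun z => F z i j) ξ :=
  (hF.wirtinger_wirtinger_clm_comp (Matrix.entryLinearMap ℂ ℂ i j).toContinuousLinearMap).symm

end Matrix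

section CP1

lemma ContDiffAt.conj {X : Type*} [NormedAddCommGroup X] [NormedSpace ℝ X] {n : WithTop ℕ∞}
    {f : X → ℂ} {x : X} (hf : ContDiffAt ℝ n f x) : ContDiffAt ℝ n (fun z => conj (f z)) x :=
  conjCLE.contDiff.contDiffAt.comp x hf

lemma one_add_mul_conj_ne_zero (w : ℂ) : 1 + w * conj w ≠ 0 := by
  rw [mul_conj]
  exact_mod_cast (add_pos_of_pos_of_nonneg one_pos (normSq_nonneg w)).ne'

noncomputable def cp1Projector (W : ℂ → ℂ) (ξ : ℂ) : Matrix (Fin 2) (Fin 2) ℂ :=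
  1 - ((1 : ℂ) + (normSq (W ξ) : ℂ))⁻¹ • !![1, conj (W ξ); W ξ, (normSq (W ξ) : ℂ)]

variable {W : ℂ → ℂ} {ξ : ℂ}

lemma cp1Projector_eq : cp1Projector W = fun z =>
    (1 + W z * conj (W z))⁻¹ • !![W z * conj (W z), -conj (W z); -W z, 1] := by
  funext z
  have := one_add_mul_conj_ne_zero (W z)
  ext i j
  fin_cases i <;> fin_cases j <;>
    simp only [cp1Projector, ← mul_conj, Fin.zero_eta, Fin.mk_one, Fin.isValue,
      Matrix.smul_apply, Matrix.sub_apply, Matrix.of_apply, Matrix.cons_val',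
      Matrix.cons_val_zero, Matrix.cons_val_one, Matrix.cons_val_fin_one, Matrix.one_apply_eq,
      Matrix.one_apply_ne, ne_eq, zero_ne_one, one_ne_zero, not_false_eq_true, smul_eq_mul] <;>
    field_simp <;>
    ring

lemma ContDiffAt.cp1Projector {n : WithTop ℕ∞} (hW : ContDiffAt ℝ n W ξ) :
    ContDiffAt ℝ n (cp1Projector W) ξ := by
  rw [cp1Projector_eq]
  refine ((contDiffAt_const.add (hW.mul hW.conj)).inv (one_add_mul_conj_ne_zero _)).smul
    (contDiffAt_matrix_iff.2 fun i j => ?_)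
  fin_cases i <;> fin_cases j <;>
    simp only [Fin.zero_eta, Fin.mk_one, Fin.isValue, Matrix.of_apply, Matrix.cons_val',
      Matrix.cons_val_zero, Matrix.cons_val_one, Matrix.cons_val_fin_one]
  exacts [hW.mul hW.conj, hW.conj.neg, hW.neg, contDiffAt_const]

lemma wd_wdbar_cp1Projector (hW : ContDiffAt ℝ 2 W ξ)
    (hEL : wd (wdbar W) ξ
      = 2 * conj (W ξ) / (1 + (normSq (W ξ) : ℂ)) * wd W ξ * wdbar W ξ) :
    wd (wdbar (cp1Projector W)) ξ
      = ((normSq (wd W ξ) + normSq (wdbar W ξ) : ℂ) / (1 + (normSq (W ξ) : ℂ)) ^ 2)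
        • (1 - (2 : ℂ) • cp1Projector W ξ) := by
  have hg := contDiffAt_const (c := (1 : ℂ)).add (hW.mul hW.conj)
  have hg0 := one_add_mul_conj_ne_zero (W ξ)
  have hh : ContDiffAt ℝ 2 (fun z => (1 + W z * conj (W z))⁻¹) ξ := hg.inv hg0
  have hW1 := hW.differentiableAt (n := 2) (by norm_num)
  have hg1 := hg.differentiableAt (n := 2) (by norm_num)
  have hWc1 := hW.conj.differentiableAt (n := 2) (by norm_num)
  have hWc2 : wirtinger (-I) (wirtinger I fun z => conj (W z)) ξ
      = conj (wirtinger (-I) (wirtinger I W) ξ) := by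
    rw [wirtinger_wirtinger_conj, hW.wirtinger_wirtinger_comm]
    simp
  simp only [wd_eq_wirtinger, wdbar_eq_wirtinger, ← mul_conj] at hEL ⊢
  ext i j
  rw [hW.cp1Projector.wirtinger_wirtinger_apply, cp1Projector_eq]
  fin_cases i <;> fin_cases j <;>
    simp only [Fin.zero_eta, Fin.mk_one, Fin.isValue, Matrix.smul_apply, Matrix.sub_apply,
      Matrix.of_apply, Matrix.cons_val', Matrix.cons_val_zero, Matrix.cons_val_one,
      Matrix.cons_val_fin_one, Matrix.one_apply_eq, Matrix.one_apply_ne, ne_eq, zero_ne_one,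
      one_ne_zero, not_false_eq_true, smul_eq_mul, mul_neg, mul_one] <;>
    simp only [wirtinger_neg, wirtinger_wirtinger_mul hh (hW.mul hW.conj),
      wirtinger_wirtinger_mul hh hW.conj, wirtinger_wirtinger_mul hh hW,
      wirtinger_wirtinger_inv hg hg0, wirtinger_wirtinger_mul hW hW.conj, hWc2, hEL,
      wirtinger_const_add, wirtinger_inv hg1 hg0, wirtinger_mul hW1 hWc1, wirtinger_conj,
      map_neg, conj_I, neg_neg] <;>
    simp only [map_mul, map_div₀, map_add, map_one, map_ofNat, conj_conj] <;>
    field_simp <;>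
    ring

end CP1

/-- If `W` solves the `ℂP¹` sigma model equation
`∂∂̄W = (2 conj(W)/(1+|W|²)) ∂W ∂̄W` on an open set `Ω`, then the projector-valued map
`P = 1 − (1/(1+|W|²))·[[1, conj W],[W, |W|²]]` satisfies `[∂∂̄P, P] = 0` on `Ω`. -/
theorem CP1_equation_matrix_form (Ω : Set ℂ) (hΩ : IsOpen Ω)
    (W : ℂ → ℂ) (hW : ContDiffOn ℝ 2 W Ω)
    (hEL : ∀ ξ ∈ Ω, wd (fun z => wdbar W z) ξ
      = 2 * (starRingEnd ℂ) (W ξ) / (1 + (Complex.normSq (W ξ) : ℂ))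
        * wd W ξ * wdbar W ξ)
    (P : ℂ → Matrix (Fin 2) (Fin 2) ℂ)
    (hP : P = fun ξ => 1 - ((1 : ℂ) + (Complex.normSq (W ξ) : ℂ))⁻¹
      • !![1, (starRingEnd ℂ) (W ξ); W ξ, (Complex.normSq (W ξ) : ℂ)]) :
    ∀ ξ ∈ Ω, wd (fun z => wdbar P z) ξ * P ξ - P ξ * wd (fun z => wdbar P z) ξ = 0 := by
  intro ξ hξ
  obtain rfl : P = cp1Projector W := hP
  rw [wd_wdbar_cp1Projector (hW.contDiffAt (hΩ.mem_nhds hξ)) (hEL ξ hξ), sub_eq_zero]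
  exact (((Commute.one_left _).sub_left ((Commute.refl _).smul_left _)).smul_left _).eq
end

section
/- Let Ω ⊆ ℂ be open and let W : Ω → ℂ be twice continuously differentiable and satisfy the ℂP¹ sigma model equation ∂∂̄W = (2·conj(W)/(1+|W|²))·∂W·∂̄W on Ω. Then the function J : Ω → ℂ defined by J := ∂W · conj(∂̄W) / (1+|W|²)² satisfies ∂̄J = 0 on Ω (i.e. J is holomorphic on Ω). -/
/-! The real derivative of `F : ℂ → ℂ` at `ξ` is `z ↦ ∂F(ξ) z + ∂̄F(ξ) z̄`; in this form the
product, conjugation and holomorphic chain rules for `∂`, `∂̄` are read off directly. For `C²`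
maps `∂̄∂W = ∂∂̄W` by symmetry of the second derivative. With `p = ∂W`, `q = ∂̄W` and
`ρ = 1 + |W|²`, so that `∂̄ρ = W̄ q + W p̄`, this gives
`ρ³ ∂̄J = ρ (∂̄p) q̄ + ρ p conj(∂q) - 2 p q̄ ∂̄ρ`, and the sigma model equation for `∂̄p = ∂q` and
its conjugate turn the right-hand side into `2W̄pqq̄ + 2Wpp̄q̄ - 2pq̄(W̄q + Wp̄) = 0`. -/

open Complex

section

variable {E : Type*} [NormedAddCommGroup E] [NormedSpace ℂ E] {F : ℂ → E} {ξ : ℂ}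

theorem HasFDerivAt.hasFDerivAt_wd {Φ : ℂ →L[ℝ] ℂ →L[ℝ] E}
    (h : HasFDerivAt (fderiv ℝ F) Φ ξ) :
    HasFDerivAt (wd F) ((2 : ℂ)⁻¹ • (Φ.flip 1 - I • Φ.flip I)) ξ := by
  have happly (v : ℂ) : HasFDerivAt (fun z => fderiv ℝ F z v) (Φ.flip v) ξ := by
    simpa using h.clm_apply (hasFDerivAt_const v ξ)
  exact ((happly 1).sub ((happly I).const_smul I)).const_smul _

theorem HasFDerivAt.hasFDerivAt_wdbar {Φ : ℂ →L[ℝ] ℂ →L[ℝ] E}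
    (h : HasFDerivAt (fderiv ℝ F) Φ ξ) :
    HasFDerivAt (wdbar F) ((2 : ℂ)⁻¹ • (Φ.flip 1 + I • Φ.flip I)) ξ := by
  have happly (v : ℂ) : HasFDerivAt (fun z => fderiv ℝ F z v) (Φ.flip v) ξ := by
    simpa using h.clm_apply (hasFDerivAt_const v ξ)
  exact ((happly 1).add ((happly I).const_smul I)).const_smul _

theorem ContDiffAt.wdbar_wd_eq_wd_wdbar (hF : ContDiffAt ℝ 2 F ξ) :
    wdbar (wd F) ξ = wd (wdbar F) ξ := by
  have hΦ : HasFDerivAt (fderiv ℝ F) (fderiv ℝ (fderiv ℝ F) ξ) ξ :=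
    ((hF.fderiv_right_succ (n := 1)).differentiableAt one_ne_zero).hasFDerivAt
  have hsymm := hF.isSymmSndFDerivAt (by simp)
  rw [wdbar, hΦ.hasFDerivAt_wd.fderiv, wd, hΦ.hasFDerivAt_wdbar.fderiv]
  simp only [smul_apply, sub_apply, add_apply, ContinuousLinearMap.flip_apply, hsymm I 1,
    smul_sub, smul_add]
  module

theorem ContDiffAt.wd {n : WithTop ℕ∞} (hF : ContDiffAt ℝ (n + 1) F ξ) :
    ContDiffAt ℝ n (wd F) ξ := by
  have := hF.fderiv_right_succ
  unfold _root_.wd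
  fun_prop

theorem ContDiffAt.wdbar {n : WithTop ℕ∞} (hF : ContDiffAt ℝ (n + 1) F ξ) :
    ContDiffAt ℝ n (wdbar F) ξ := by
  have := hF.fderiv_right_succ
  unfold _root_.wdbar
  fun_prop

end

/-- `a` and `b` are the Wirtinger derivatives `∂F(ξ)` and `∂̄F(ξ)`. -/
def HasWirtingerDerivAt (F : ℂ → ℂ) (a b ξ : ℂ) : Prop :=
  HasFDerivAt F (a • ContinuousLinearMap.id ℝ ℂ + b • (conjCLE : ℂ →L[ℝ] ℂ)) ξ

theorem ContinuousLinearMap.eq_wirtinger (L : ℂ →L[ℝ] ℂ) :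
    L = ((2 : ℂ)⁻¹ * (L 1 - I * L I)) • ContinuousLinearMap.id ℝ ℂ
      + ((2 : ℂ)⁻¹ * (L 1 + I * L I)) • (conjCLE : ℂ →L[ℝ] ℂ) := by
  ext z
  have hL : L z = z.re * L 1 + z.im * L I := by
    have hz : z = z.re • (1 : ℂ) + z.im • I := by simp [real_smul, re_add_im]
    conv_lhs => rw [hz, map_add, map_smul, map_smul]
    simp only [real_smul]
  simp only [hL, add_apply, smul_apply, ContinuousLinearMap.id_apply,
    ContinuousLinearEquiv.coe_coe, conjCLE_apply, smul_eq_mul]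
  conv_rhs => rw [← re_add_im z]
  simp only [map_add, map_mul, conj_ofReal, conj_I]
  linear_combination (↑z.im * L I) * I_mul_I

namespace HasWirtingerDerivAt

variable {F G : ℂ → ℂ} {a b c d ξ : ℂ}

theorem _root_.HasFDerivAt.hasWirtingerDerivAt {L : ℂ →L[ℝ] ℂ} (h : HasFDerivAt F L ξ) :
    HasWirtingerDerivAt F (wd F ξ) (wdbar F ξ) ξ := by
  rw [HasWirtingerDerivAt, wd, wdbar, h.fderiv]
  simpa only [smul_eq_mul, ← L.eq_wirtinger] using h

theorem wdbar_eq (h : HasWirtingerDerivAt F a b ξ) : wdbar F ξ = b := by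
  rw [wdbar, h.fderiv]
  simp only [add_apply, smul_apply, ContinuousLinearMap.id_apply, ContinuousLinearEquiv.coe_coe,
    conjCLE_apply, smul_eq_mul, map_one, conj_I]
  linear_combination (2 : ℂ)⁻¹ * (a - b) * I_mul_I

theorem const_add (h : HasWirtingerDerivAt F a b ξ) (c : ℂ) :
    HasWirtingerDerivAt (fun z => c + F z) a b ξ :=
  (hasFDerivAt_const_add_iff c).2 h

theorem mul (hF : HasWirtingerDerivAt F a b ξ) (hG : HasWirtingerDerivAt G c d ξ) :
    HasWirtingerDerivAt (fun z => F z * G z) (F ξ * c + G ξ * a) (F ξ * d + G ξ * b) ξ := by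
  refine (HasFDerivAt.mul hF hG).congr_fderiv ?_
  ext z
  simp only [add_apply, smul_apply, ContinuousLinearMap.id_apply, ContinuousLinearEquiv.coe_coe,
    conjCLE_apply, smul_eq_mul]
  ring

theorem conj (h : HasWirtingerDerivAt F a b ξ) :
    HasWirtingerDerivAt (fun z => starRingEnd ℂ (F z)) (starRingEnd ℂ b) (starRingEnd ℂ a) ξ := by
  refine ((conjCLE : ℂ →L[ℝ] ℂ).hasFDerivAt.comp ξ h).congr_fderiv ?_
  ext z
  simp only [ContinuousLinearMap.coe_comp, Function.comp_apply, add_apply,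
    smul_apply, ContinuousLinearMap.id_apply, ContinuousLinearEquiv.coe_coe,
    conjCLE_apply, smul_eq_mul, map_add, map_mul, conj_conj]
  ring

theorem normSq (h : HasWirtingerDerivAt F a b ξ) :
    HasWirtingerDerivAt (fun z => (Complex.normSq (F z) : ℂ))
      (F ξ * starRingEnd ℂ b + starRingEnd ℂ (F ξ) * a)
      (F ξ * starRingEnd ℂ a + starRingEnd ℂ (F ξ) * b) ξ := by
  simpa only [mul_conj] using h.mul h.conj

theorem _root_.HasDerivAt.comp_hasWirtingerDerivAt {φ : ℂ → ℂ} {m : ℂ}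
    (hφ : HasDerivAt φ m (F ξ)) (hF : HasWirtingerDerivAt F a b ξ) :
    HasWirtingerDerivAt (fun z => φ (F z)) (m * a) (m * b) ξ := by
  refine ((hφ.hasFDerivAt.restrictScalars ℝ).comp ξ hF).congr_fderiv ?_
  ext z
  simp only [ContinuousLinearMap.coe_comp, Function.comp_apply,
    ContinuousLinearMap.coe_restrictScalars', ContinuousLinearMap.toSpanSingleton_apply,
    add_apply, smul_apply, ContinuousLinearMap.id_apply, ContinuousLinearEquiv.coe_coe,
    conjCLE_apply, smul_eq_mul]
  ring

theorem pow (h : HasWirtingerDerivAt F a b ξ) (n : ℕ) :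
    HasWirtingerDerivAt (fun z => F z ^ n) (n * F ξ ^ (n - 1) * a) (n * F ξ ^ (n - 1) * b) ξ :=
  (hasDerivAt_pow n (F ξ)).comp_hasWirtingerDerivAt h

theorem inv (h : HasWirtingerDerivAt F a b ξ) (hF : F ξ ≠ 0) :
    HasWirtingerDerivAt (fun z => (F z)⁻¹) (-(F ξ ^ 2)⁻¹ * a) (-(F ξ ^ 2)⁻¹ * b) ξ :=
  (hasDerivAt_inv hF).comp_hasWirtingerDerivAt h

theorem div (hF : HasWirtingerDerivAt F a b ξ) (hG : HasWirtingerDerivAt G c d ξ) (hGξ : G ξ ≠ 0) :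
    HasWirtingerDerivAt (fun z => F z / G z)
      ((G ξ * a - F ξ * c) / G ξ ^ 2) ((G ξ * b - F ξ * d) / G ξ ^ 2) ξ := by
  convert hF.mul (hG.inv hGξ) using 1 <;> field_simp <;> ring

end HasWirtingerDerivAt

/-- For any solution `W` of the `ℂP¹` sigma model equation on an open set `Ω`, the Hopf
differential coefficient `J = ∂W · conj(∂̄W)/(1+|W|²)²` satisfies `∂̄J = 0` on `Ω`. -/
theorem CP1_hopf_differential_holomorphic (Ω : Set ℂ) (hΩ : IsOpen Ω)
    (W : ℂ → ℂ) (hW : ContDiffOn ℝ 2 W Ω)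
    (hEL : ∀ ξ ∈ Ω, wd (fun z => wdbar W z) ξ
      = 2 * (starRingEnd ℂ) (W ξ) / (1 + (Complex.normSq (W ξ) : ℂ))
        * wd W ξ * wdbar W ξ)
    (J : ℂ → ℂ)
    (hJ : J = fun ξ => wd W ξ * (starRingEnd ℂ) (wdbar W ξ)
      / ((1 + (Complex.normSq (W ξ) : ℂ)) ^ 2)) :
    ∀ ξ ∈ Ω, wdbar J ξ = 0 := by
  intro ξ hξ
  have hW2 : ContDiffAt ℝ 2 W ξ := hW.contDiffAt (hΩ.mem_nhds hξ)
  have hW' := (hW2.differentiableAt two_ne_zero).hasFDerivAt.hasWirtingerDerivAt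
  have hp := ((hW2.wd (n := 1)).differentiableAt one_ne_zero).hasFDerivAt.hasWirtingerDerivAt
  have hq := ((hW2.wdbar (n := 1)).differentiableAt one_ne_zero).hasFDerivAt.hasWirtingerDerivAt
  have hρ : (1 + (Complex.normSq (W ξ) : ℂ)) ^ 2 ≠ 0 := by
    exact_mod_cast (pow_pos (add_pos_of_pos_of_nonneg one_pos (normSq_nonneg (W ξ))) 2).ne'
  have hJ' := hJ ▸ (hp.mul hq.conj).div ((hW'.normSq.const_add 1).pow 2) hρ
  rw [hJ'.wdbar_eq, hW2.wdbar_wd_eq_wd_wdbar, hEL ξ hξ]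
  simp only [map_mul, map_div₀, map_add, map_one, map_ofNat, conj_conj, conj_ofReal]
  field_simp
  ring
end

section
/- Let P, A, B be square complex matrices of the same size satisfying P² = P, AP + PA = A, and BP + PB = B. Then tr([A,B]·[A,P]) = 0 and tr([A,B]·[B,P]) = 0. -/
open Matrix

/-- For a projector `P` and matrices `A`, `B` off-diagonal with respect to `P`
(`AP + PA = A`, `BP + PB = B`), one has `tr([A,B]·[A,P]) = 0` and `tr([A,B]·[B,P]) = 0`. -/
theorem trace_commutator_orthogonality (n : ℕ) (P A B : Matrix (Fin n) (Fin n) ℂ)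
    (hP : P * P = P) (hA : A * P + P * A = A) (hB : B * P + P * B = B) :
    ((A * B - B * A) * (A * P - P * A)).trace = 0 ∧
    ((A * B - B * A) * (B * P - P * B)).trace = 0 := by
  set S : Matrix (Fin n) (Fin n) ℂ := 1 - P - P with hSdef
  have hPAP : P * A * P = 0 := by
    have h := congrArg (fun X => P * X) hA
    simp only [mul_add, ← mul_assoc, hP] at h
    exact add_eq_right.mp h
  have hPBP : P * B * P = 0 := by
    have h := congrArg (fun X => P * X) hB
    simp only [mul_add, ← mul_assoc, hP] at h
    exact add_eq_right.mp h
  have hAP : A * P = A - P * A := eq_sub_of_add_eq hA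
  have hBP : B * P = B - P * B := eq_sub_of_add_eq hB
  have hS2 : S * S = 1 := by
    simp only [hSdef, sub_mul, mul_sub, one_mul, mul_one, hP]
    abel
  have hSA : S * A * S = -A := by
    simp only [hSdef, sub_mul, mul_sub, one_mul, mul_one, hPAP, hAP]
    abel
  have hSB : S * B * S = -B := by
    simp only [hSdef, sub_mul, mul_sub, one_mul, mul_one, hPBP, hBP]
    abel
  have hSP : S * P * S = P := by
    simp only [hSdef, sub_mul, mul_sub, one_mul, mul_one, hP]
    abel
  have hconj : ∀ X Y : Matrix (Fin n) (Fin n) ℂ,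
      S * (X * Y) * S = (S * X * S) * (S * Y * S) := by
    intro X Y
    calc S * (X * Y) * S = (S * X) * ((S * S) * (Y * S)) := by
          rw [hS2]; noncomm_ring
      _ = (S * X * S) * (S * Y * S) := by noncomm_ring
  have hconjsub : ∀ X Y : Matrix (Fin n) (Fin n) ℂ,
      S * (X - Y) * S = S * X * S - S * Y * S := by
    intro X Y; noncomm_ring
  have hSD : S * (A * B - B * A) * S = A * B - B * A := by
    rw [hconjsub, hconj, hconj, hSA, hSB]
    noncomm_ring
  have key : ∀ C : Matrix (Fin n) (Fin n) ℂ,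
      S * C * S = -C → ((A * B - B * A) * C).trace = 0 := by
    intro C hSC
    have h1 : S * ((A * B - B * A) * C) * S = -((A * B - B * A) * C) := by
      rw [hconj, hSD, hSC]; noncomm_ring
    have h2 : (S * ((A * B - B * A) * C) * S).trace
        = ((A * B - B * A) * C).trace := by
      rw [trace_mul_comm, ← mul_assoc, hS2, one_mul]
    rw [h1, trace_neg] at h2
    linear_combination (-(1:ℂ)/2) * h2
  constructor
  · exact key _ (by rw [hconjsub, hconj, hconj, hSA, hSP]; noncomm_ring)
  · exact key _ (by rw [hconjsub, hconj, hconj, hSB, hSP]; noncomm_ring)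
end

section
/- (Metric of the surface induced by the ℂPᴺ model.) Let Ω ⊆ ℂ be open, N ≥ 1, and let f : Ω → ℂ^{N+1}∖{0} be continuously differentiable. Define P := 1 − (f·fᴴ)/(fᴴ·f) and K := [∂̄P, P]. Then for every ξ ∈ Ω: (i) tr(Kᴴ·K) = ((∂̄fᴴ)·P·(∂f) + (∂fᴴ)·P·(∂̄f))/(fᴴ·f), and (ii) tr(Kᴴ·Kᴴ) = −2·((∂fᴴ)·P·(∂f))/(fᴴ·f), where ∂fᴴ denotes ∂ applied to the map ξ ↦ f(ξ)ᴴ (so ∂fᴴ = (∂̄f)ᴴ and ∂̄fᴴ = (∂f)ᴴ). Consequently, the complex tangent vectors ∂X = i·Kᴴ and ∂̄X = i·K of the generalized Weierstrass immersion satisfy −tr(∂X·∂̄X) = tr(KᴴK) and −tr(∂X·∂X) = tr(KᴴKᴴ) = −2J, where J = (∂fᴴ)·P·(∂f)/(fᴴ·f). -/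
open Matrix

attribute [local instance] Matrix.frobeniusNormedAddCommGroup Matrix.frobeniusNormedSpace

/-!
Write `v = f ξ`, `ρ = vᴴv` and `Q = 1 - P = ρ⁻¹ v vᴴ`. Splitting `1 = P + Q`, the terms
`P (∂̄P) P` cancel in the commutator, so `K = Q (∂̄P) P - P (∂̄P) Q`. Applying `∂̄` (which obeys the
Leibniz rule for `ℂ`-bilinear products and satisfies `∂̄(fᴴ) = (∂f)ᴴ`) to the identities `P f = 0`
and `fᴴ P = 0` gives `(∂̄P) v = -P ∂̄f` and `vᴴ (∂̄P) = -(∂f)ᴴ P`; as `P² = P`, this yields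
`K = ρ⁻¹ (x vᴴ - v y)` with `x = P ∂̄f` and `y = (∂f)ᴴ P` both orthogonal to `v`. The traces of
`KᴴK` and `KᴴKᴴ` for such a rank-two matrix follow from products of rank-one matrices, and
`P² = P = Pᴴ` turns `xᴴx`, `y yᴴ`, `xᴴyᴴ` into the quadratic forms of the statement.
-/

section Wirtinger

variable {E F G : Type*} [NormedAddCommGroup E] [NormedSpace ℂ E] [NormedAddCommGroup F]
  [NormedSpace ℂ F] [NormedAddCommGroup G] [NormedSpace ℂ G]

@[simp]
theorem wdbar_const (c : E) (ξ : ℂ) : wdbar (fun _ => c) ξ = 0 := by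
  simp [wdbar]

theorem wdbar_star [StarAddMonoid E] [StarModule ℂ E] [StarModule ℝ E] [ContinuousStar E]
    (u : ℂ → E) (ξ : ℂ) : wdbar (fun z => star (u z)) ξ = star (wd u ξ) := by
  simp [wdbar, wd, fderiv_star, star_smul, Complex.conj_I]

theorem wd_star [StarAddMonoid E] [StarModule ℂ E] [StarModule ℝ E] [ContinuousStar E]
    (u : ℂ → E) (ξ : ℂ) : wd (fun z => star (u z)) ξ = star (wdbar u ξ) := by
  simp [wdbar, wd, fderiv_star, star_smul, Complex.conj_I, sub_eq_add_neg]

section Bilinear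

variable [FiniteDimensional ℂ E] [FiniteDimensional ℂ F] (B : E →ₗ[ℂ] F →ₗ[ℂ] G)

noncomputable def LinearMap.toRealContinuousBilin : E →L[ℝ] F →L[ℝ] G :=
  (LinearMap.toContinuousLinearMap
    (LinearMap.toContinuousLinearMap.toLinearMap ∘ₗ B)).bilinearRestrictScalars ℝ

theorem DifferentiableAt.linearMap_apply₂ {H : Type*} [NormedAddCommGroup H] [NormedSpace ℝ H]
    {u : H → E} {v : H → F} {x : H} (hu : DifferentiableAt ℝ u x)
    (hv : DifferentiableAt ℝ v x) : DifferentiableAt ℝ (fun z => B (u z) (v z)) x :=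
  ((B.toRealContinuousBilin).hasFDerivAt_of_bilinear hu.hasFDerivAt hv.hasFDerivAt).differentiableAt

theorem wdbar_linearMap_apply₂ {u : ℂ → E} {v : ℂ → F} {ξ : ℂ} (hu : DifferentiableAt ℝ u ξ)
    (hv : DifferentiableAt ℝ v ξ) :
    wdbar (fun z => B (u z) (v z)) ξ = B (wdbar u ξ) (v ξ) + B (u ξ) (wdbar v ξ) := by
  change wdbar (fun z => B.toRealContinuousBilin (u z) (v z)) ξ = _
  rw [wdbar, B.toRealContinuousBilin.fderiv_of_bilinear hu hv]
  simp only [LinearMap.toRealContinuousBilin, ContinuousLinearMap.precompR_apply,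
    ContinuousLinearMap.compL_apply, _root_.add_apply, ContinuousLinearMap.comp_apply,
    ContinuousLinearMap.bilinearRestrictScalars_apply_apply, LinearMap.coe_toContinuousLinearMap',
    LinearMap.coe_comp, LinearEquiv.coe_coe, Function.comp_apply,
    ContinuousLinearMap.precompL_apply, wdbar, map_add, map_smul, LinearMap.add_apply,
    LinearMap.smul_apply]
  module

end Bilinear

end Wirtinger

section Projection

variable {n : Type*} [Fintype n] [DecidableEq n]

noncomputable def perpProj (v : n → ℂ) : Matrix n n ℂ :=
  1 - (star v ⬝ᵥ v)⁻¹ • vecMulVec v (star v)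

open scoped ComplexOrder in
theorem perpProj_mulVec_self (v : n → ℂ) : perpProj v *ᵥ v = 0 := by
  by_cases hv : v = 0
  · simp [hv]
  have hρ : star v ⬝ᵥ v ≠ 0 := mt dotProduct_star_self_eq_zero.mp hv
  simp [perpProj, sub_mulVec, smul_mulVec, vecMulVec_mulVec, smul_smul, inv_mul_cancel₀ hρ]

theorem conjTranspose_perpProj (v : n → ℂ) : (perpProj v)ᴴ = perpProj v := by
  simp [perpProj, conjTranspose_sub, conjTranspose_smul, ← star_dotProduct]

theorem star_vecMul_perpProj (v : n → ℂ) : star v ᵥ* perpProj v = 0 := by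
  rw [← conjTranspose_perpProj, vecMul_conjTranspose, star_star, perpProj_mulVec_self, star_zero]

theorem perpProj_mul_self (v : n → ℂ) : perpProj v * perpProj v = perpProj v := by
  calc perpProj v * perpProj v
      = perpProj v * (1 - (star v ⬝ᵥ v)⁻¹ • vecMulVec v (star v)) := rfl
    _ = perpProj v := by
      rw [mul_sub, mul_one, mul_smul_comm, mul_vecMulVec, perpProj_mulVec_self, zero_vecMulVec,
        smul_zero, sub_zero]

theorem vecMul_perpProj_dotProduct_mulVec (v a b : n → ℂ) :
    (a ᵥ* perpProj v) ⬝ᵥ (perpProj v *ᵥ b) = a ⬝ᵥ perpProj v *ᵥ b := by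
  rw [← dotProduct_mulVec, mulVec_mulVec, perpProj_mul_self]

theorem commutator_perpProj (v a b : n → ℂ) (D : Matrix n n ℂ)
    (hDv : D *ᵥ v = -(perpProj v *ᵥ b)) (hvD : star v ᵥ* D = -(star a ᵥ* perpProj v)) :
    D * perpProj v - perpProj v * D = (star v ⬝ᵥ v)⁻¹ •
      (vecMulVec (perpProj v *ᵥ b) (star v) - vecMulVec v (star a ᵥ* perpProj v)) := by
  have hQ : 1 - perpProj v = (star v ⬝ᵥ v)⁻¹ • vecMulVec v (star v) := sub_sub_cancel _ _
  calc D * perpProj v - perpProj v * D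
      = (1 - perpProj v) * D * perpProj v - perpProj v * D * (1 - perpProj v) := by
        simp only [sub_mul, mul_sub, one_mul, mul_one, Matrix.mul_assoc]
        abel
    _ = _ := by
        rw [hQ, smul_mul_assoc, smul_mul_assoc, mul_smul_comm, vecMulVec_mul, vecMulVec_mul,
          mul_vecMulVec, ← mulVec_mulVec, hDv, hvD, neg_vecMul, vecMul_vecMul, mulVec_neg,
          mulVec_mulVec, perpProj_mul_self, vecMulVec_neg, neg_vecMulVec, smul_sub, smul_neg,
          smul_neg]
        abel

end Projection

section RankTwo

variable {n : Type*} [Fintype n] {v x y : n → ℂ} {K : Matrix n n ℂ}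

theorem conjTranspose_rankTwo
    (hK : K = (star v ⬝ᵥ v)⁻¹ • (vecMulVec x (star v) - vecMulVec v y)) :
    Kᴴ = (star v ⬝ᵥ v)⁻¹ • (vecMulVec v (star x) - vecMulVec (star y) (star v)) := by
  rw [hK, conjTranspose_smul, conjTranspose_sub, conjTranspose_vecMulVec, conjTranspose_vecMulVec,
    star_star, star_inv₀, ← star_dotProduct]

theorem trace_conjTranspose_mul_self_rankTwo (hx : star v ⬝ᵥ x = 0)
    (hK : K = (star v ⬝ᵥ v)⁻¹ • (vecMulVec x (star v) - vecMulVec v y)) :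
    (Kᴴ * K).trace = (star x ⬝ᵥ x + y ⬝ᵥ star y) / (star v ⬝ᵥ v) := by
  have hx' : star x ⬝ᵥ v = 0 := by rw [← star_star v, star_dotProduct_star, hx, star_zero]
  have hρ := inv_inv (star v ⬝ᵥ v) ▸ mul_inv_mul_cancel (star v ⬝ᵥ v)⁻¹
  rw [conjTranspose_rankTwo hK, hK]
  simp only [smul_mul_smul_comm, sub_mul, mul_sub, vecMulVec_mul_vecMulVec, hx, hx', trace_smul,
    trace_sub, trace_vecMulVec, zero_smul, dotProduct_zero, dotProduct_smul, smul_eq_mul,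
    dotProduct_comm v (star v), dotProduct_comm (star y) y]
  linear_combination (star x ⬝ᵥ x + y ⬝ᵥ star y) * hρ

theorem trace_conjTranspose_mul_conjTranspose_rankTwo (hx : star v ⬝ᵥ x = 0) (hy : y ⬝ᵥ v = 0)
    (hK : K = (star v ⬝ᵥ v)⁻¹ • (vecMulVec x (star v) - vecMulVec v y)) :
    (Kᴴ * Kᴴ).trace = -2 * (star x ⬝ᵥ star y) / (star v ⬝ᵥ v) := by
  have hx' : star x ⬝ᵥ v = 0 := by rw [← star_star v, star_dotProduct_star, hx, star_zero]
  have hy' : star v ⬝ᵥ star y = 0 := by rw [star_dotProduct_star, hy, star_zero]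
  have hρ := inv_inv (star v ⬝ᵥ v) ▸ mul_inv_mul_cancel (star v ⬝ᵥ v)⁻¹
  rw [conjTranspose_rankTwo hK]
  simp only [smul_mul_smul_comm, sub_mul, mul_sub, vecMulVec_mul_vecMulVec, hx', hy', trace_smul,
    trace_sub, trace_vecMulVec, zero_smul, dotProduct_zero, dotProduct_smul, smul_eq_mul,
    dotProduct_comm v (star v), dotProduct_comm (star y) (star x)]
  linear_combination (-2 * (star x ⬝ᵥ star y)) * hρ

end RankTwo

section CPN

variable {n : Type*} [Fintype n] [DecidableEq n]

open scoped ComplexOrder in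
theorem differentiableAt_perpProj {v : n → ℂ} (hv : v ≠ 0) : DifferentiableAt ℝ perpProj v := by
  have hstar : DifferentiableAt ℝ (fun w : n → ℂ => star w) v := differentiableAt_id.star
  have hρ := hstar.linearMap_apply₂ (dotProductBilin ℂ ℂ) differentiableAt_id
  exact ((hρ.inv (mt dotProduct_star_self_eq_zero.mp hv)).smul
    (differentiableAt_id.linearMap_apply₂ (vecMulVecBilin ℂ ℂ) hstar)).const_sub 1

variable {f : ℂ → n → ℂ} {ξ : ℂ}

theorem wdbar_perpProj_comp_mulVec (hf : DifferentiableAt ℝ f ξ) (hf0 : f ξ ≠ 0) :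
    wdbar (fun z => perpProj (f z)) ξ *ᵥ f ξ = -(perpProj (f ξ) *ᵥ wdbar f ξ) := by
  have h := wdbar_linearMap_apply₂ (mulVecBilin ℂ ℂ) ((differentiableAt_perpProj hf0).comp ξ hf) hf
  simp only [mulVecBilin_apply, Function.comp_apply, perpProj_mulVec_self, wdbar_const] at h
  exact eq_neg_of_add_eq_zero_left h.symm

theorem star_vecMul_wdbar_perpProj_comp (hf : DifferentiableAt ℝ f ξ) (hf0 : f ξ ≠ 0) :
    star (f ξ) ᵥ* wdbar (fun z => perpProj (f z)) ξ = -(star (wd f ξ) ᵥ* perpProj (f ξ)) := by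
  have h := wdbar_linearMap_apply₂ (vecMulBilin ℂ ℂ) hf.star
    ((differentiableAt_perpProj hf0).comp ξ hf)
  simp only [vecMulBilin_apply, Function.comp_apply, star_vecMul_perpProj, wdbar_const,
    wdbar_star] at h
  exact eq_neg_of_add_eq_zero_right h.symm

theorem commutator_wdbar_perpProj_comp (hf : DifferentiableAt ℝ f ξ) (hf0 : f ξ ≠ 0) :
    wdbar (fun z => perpProj (f z)) ξ * perpProj (f ξ)
        - perpProj (f ξ) * wdbar (fun z => perpProj (f z)) ξ
      = (star (f ξ) ⬝ᵥ f ξ)⁻¹ • (vecMulVec (perpProj (f ξ) *ᵥ wdbar f ξ) (star (f ξ))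
        - vecMulVec (f ξ) (star (wd f ξ) ᵥ* perpProj (f ξ))) :=
  commutator_perpProj _ _ _ _ (wdbar_perpProj_comp_mulVec hf hf0)
    (star_vecMul_wdbar_perpProj_comp hf hf0)

end CPN

theorem neg_trace_I_smul_mul_I_smul {n : Type*} [Fintype n] (A B : Matrix n n ℂ) :
    -((Complex.I • A) * (Complex.I • B)).trace = (A * B).trace := by
  rw [smul_mul_smul_comm, Complex.I_mul_I, trace_smul, neg_one_smul, neg_neg]

theorem metric_of_CPN_immersion_general (N : ℕ) (Ω : Set ℂ) (hΩ : IsOpen Ω)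
    (f : ℂ → Fin (N + 1) → ℂ) (hf : ContDiffOn ℝ 1 f Ω) (hf0 : ∀ ξ ∈ Ω, f ξ ≠ 0)
    (P : ℂ → Matrix (Fin (N + 1)) (Fin (N + 1)) ℂ)
    (hP : P = fun ξ => 1 - (star (f ξ) ⬝ᵥ f ξ)⁻¹ • Matrix.vecMulVec (f ξ) (star (f ξ)))
    (K : ℂ → Matrix (Fin (N + 1)) (Fin (N + 1)) ℂ)
    (hK : K = fun ξ => wdbar P ξ * P ξ - P ξ * wdbar P ξ) :
    ∀ ξ ∈ Ω,
      ((K ξ)ᴴ * K ξ).trace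
        = ((wdbar (fun z => star (f z)) ξ ⬝ᵥ (P ξ).mulVec (wd f ξ))
            + (wd (fun z => star (f z)) ξ ⬝ᵥ (P ξ).mulVec (wdbar f ξ)))
          / (star (f ξ) ⬝ᵥ f ξ) ∧
      ((K ξ)ᴴ * (K ξ)ᴴ).trace
        = -2 * (wd (fun z => star (f z)) ξ ⬝ᵥ (P ξ).mulVec (wd f ξ))
          / (star (f ξ) ⬝ᵥ f ξ) ∧
      -(((Complex.I • (K ξ)ᴴ) * (Complex.I • K ξ)).trace) = ((K ξ)ᴴ * K ξ).trace ∧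
      -(((Complex.I • (K ξ)ᴴ) * (Complex.I • (K ξ)ᴴ)).trace)
        = -2 * (wd (fun z => star (f z)) ξ ⬝ᵥ (P ξ).mulVec (wd f ξ))
          / (star (f ξ) ⬝ᵥ f ξ) := by
  intro ξ hξ
  have hfξ : DifferentiableAt ℝ f ξ :=
    (hf.contDiffAt (hΩ.mem_nhds hξ)).differentiableAt one_ne_zero
  obtain rfl : P = fun z => perpProj (f z) := hP
  subst hK
  have hKξ := commutator_wdbar_perpProj_comp hfξ (hf0 ξ hξ)
  have hx : star (f ξ) ⬝ᵥ perpProj (f ξ) *ᵥ wdbar f ξ = 0 := by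
    rw [dotProduct_mulVec, star_vecMul_perpProj, zero_dotProduct]
  have hy : (star (wd f ξ) ᵥ* perpProj (f ξ)) ⬝ᵥ f ξ = 0 := by
    rw [← dotProduct_mulVec, perpProj_mulVec_self, dotProduct_zero]
  have h1 := trace_conjTranspose_mul_self_rankTwo hx hKξ
  have h2 := trace_conjTranspose_mul_conjTranspose_rankTwo hx hy hKξ
  simp only [star_mulVec, star_vecMul, star_star, conjTranspose_perpProj,
    vecMul_perpProj_dotProduct_mulVec] at h1 h2
  beta_reduce
  rw [wdbar_star, wd_star]
  refine ⟨h1.trans (by rw [add_comm]), h2, neg_trace_I_smul_mul_I_smul _ _,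
    (neg_trace_I_smul_mul_I_smul _ _).trans h2⟩

/-- Metric of the surface induced by the `ℂPᴺ` model: with `P = 1 − (f·fᴴ)/(fᴴ·f)` and
`K = [∂̄P, P]`, one has `tr(KᴴK) = (∂̄fᴴ P ∂f + ∂fᴴ P ∂̄f)/(fᴴf)` and
`tr(KᴴKᴴ) = −2 (∂fᴴ P ∂f)/(fᴴf)`; consequently, with `∂X = iKᴴ`, `∂̄X = iK`,
`−tr(∂X·∂̄X) = tr(KᴴK)` and `−tr(∂X·∂X) = tr(KᴴKᴴ) = −2J`. -/
theorem metric_of_CPN_immersion (N : ℕ) (hN : 1 ≤ N) (Ω : Set ℂ) (hΩ : IsOpen Ω)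
    (f : ℂ → Fin (N + 1) → ℂ) (hf : ContDiffOn ℝ 1 f Ω) (hf0 : ∀ ξ ∈ Ω, f ξ ≠ 0)
    (P : ℂ → Matrix (Fin (N + 1)) (Fin (N + 1)) ℂ)
    (hP : P = fun ξ => 1 - (star (f ξ) ⬝ᵥ f ξ)⁻¹ • Matrix.vecMulVec (f ξ) (star (f ξ)))
    (K : ℂ → Matrix (Fin (N + 1)) (Fin (N + 1)) ℂ)
    (hK : K = fun ξ => wdbar P ξ * P ξ - P ξ * wdbar P ξ) :
    ∀ ξ ∈ Ω,
      ((K ξ)ᴴ * K ξ).trace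
        = ((wdbar (fun z => star (f z)) ξ ⬝ᵥ (P ξ).mulVec (wd f ξ))
            + (wd (fun z => star (f z)) ξ ⬝ᵥ (P ξ).mulVec (wdbar f ξ)))
          / (star (f ξ) ⬝ᵥ f ξ) ∧
      ((K ξ)ᴴ * (K ξ)ᴴ).trace
        = -2 * (wd (fun z => star (f z)) ξ ⬝ᵥ (P ξ).mulVec (wd f ξ))
          / (star (f ξ) ⬝ᵥ f ξ) ∧
      -(((Complex.I • (K ξ)ᴴ) * (Complex.I • K ξ)).trace) = ((K ξ)ᴴ * K ξ).trace ∧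
      -(((Complex.I • (K ξ)ᴴ) * (Complex.I • (K ξ)ᴴ)).trace)
        = -2 * (wd (fun z => star (f z)) ξ ⬝ᵥ (P ξ).mulVec (wd f ξ))
          / (star (f ξ) ⬝ᵥ f ξ) :=
  metric_of_CPN_immersion_general N Ω hΩ f hf hf0 P hP K hK
end

section
/- (Conformality for holomorphic solutions of the ℂP² model.) Let Ω ⊆ ℂ be open and let W₁, W₂ : Ω → ℂ be holomorphic. Define A := 1 + |W₁|² + |W₂|², f := (1, W₁, W₂) : Ω → ℂ³, P := 1₃ − (f·fᴴ)/A, and K := [∂̄P, P]. Then at every point of Ω: tr(Kᴴ·Kᴴ) = 0 and tr(Kᴴ·K) = (|∂W₁|² + |∂W₂|² + |W₁·∂W₂ − W₂·∂W₁|²)/A². Hence the immersion X with ∂X = iKᴴ, ∂̄X = iK induced by a holomorphic solution of the ℂP² sigma model is conformal, with conformal factor g_{ξ̄ξ} = (|∂W₁|² + |∂W₂|² + |W₁∂W₂ − W₂∂W₁|²)/A². -/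
open Matrix Complex

attribute [local instance] Matrix.frobeniusNormedAddCommGroup Matrix.frobeniusNormedSpace

/-
Since `f` is holomorphic, `∂̄P = f wᵀ` with `w = −∂̄(f̄ / A)` and `A = f̄ᵀf`. As `P f = 0` and
`wᵀf = 0` (apply `∂̄` to `f̄ᵀf / A = 1`), the commutator `K = [∂̄P, P]` is `f wᵀ` itself. For this
rank-one `K`, `tr(KᴴKᴴ) = conj(wᵀf)² = 0` and `tr(KᴴK) = A·|w|² = (A·|∂f|² − |⟨f, ∂f⟩|²) / A²`,
and Lagrange's identity turns the numerator into `|∂W₁|² + |∂W₂|² + |W₁∂W₂ − W₂∂W₁|²`.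
-/

section Wirtinger

variable {E : Type*} [NormedAddCommGroup E] [NormedSpace ℂ E]

noncomputable def wirtingerCLM (u v : E) : ℂ →L[ℝ] E :=
  (ContinuousLinearMap.id ℝ ℂ).smulRight u + Complex.conjCLE.toContinuousLinearMap.smulRight v

@[simp]
theorem wirtingerCLM_apply (u v : E) (w : ℂ) : wirtingerCLM u v w = w • u + star w • v := by
  simp [wirtingerCLM]

/-- `F` has ℝ-derivative `w ↦ w • u + w̄ • v` at `ξ`, so `∂F ξ = u` and `∂̄F ξ = v`; unlike
`wd` and `wdbar`, this predicate composes like `HasDerivAt`. -/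
def HasWirtingerAt (F : ℂ → E) (u v : E) (ξ : ℂ) : Prop :=
  HasFDerivAt F (wirtingerCLM u v) ξ

namespace HasWirtingerAt

variable {G : ℂ → E} {u v u' v' : E} {ξ : ℂ}

theorem wd_eq (h : HasWirtingerAt G u v ξ) : wd G ξ = u := by
  rw [wd, h.fderiv, wirtingerCLM_apply, wirtingerCLM_apply]
  simp only [Complex.star_def, conj_I, map_one, one_smul, smul_add, smul_smul]
  match_scalars <;> ring_nf <;> simp only [I_sq] <;> ring

theorem wdbar_eq (h : HasWirtingerAt G u v ξ) : wdbar G ξ = v := by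
  rw [wdbar, h.fderiv, wirtingerCLM_apply, wirtingerCLM_apply]
  simp only [Complex.star_def, conj_I, map_one, one_smul, smul_add, smul_smul]
  match_scalars <;> ring_nf <;> simp only [I_sq] <;> ring

theorem congr (h : HasWirtingerAt G u v ξ) (hu : u = u') (hv : v = v') :
    HasWirtingerAt G u' v' ξ :=
  hu ▸ hv ▸ h

theorem const_sub (c : E) (h : HasWirtingerAt G u v ξ) :
    HasWirtingerAt (fun z => c - G z) (-u) (-v) ξ := by
  refine (HasFDerivAt.const_sub h c).congr_fderiv ?_
  ext w; simp; module

theorem smul {c : ℂ → ℂ} {a b : ℂ} (hc : HasWirtingerAt c a b ξ) (hG : HasWirtingerAt G u v ξ) :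
    HasWirtingerAt (fun z => c z • G z) (c ξ • u + a • G ξ) (c ξ • v + b • G ξ) ξ := by
  refine (HasFDerivAt.smul hc hG).congr_fderiv ?_
  ext w
  simp
  module

theorem mul {c d : ℂ → ℂ} {a b a' b' : ℂ} (hc : HasWirtingerAt c a b ξ)
    (hd : HasWirtingerAt d a' b' ξ) :
    HasWirtingerAt (fun z => c z * d z) (c ξ * a' + a * d ξ) (c ξ * b' + b * d ξ) ξ :=
  hc.smul hd

theorem sum {ι : Type*} (s : Finset ι) {G : ι → ℂ → E} {u v : ι → E}
    (h : ∀ i ∈ s, HasWirtingerAt (G i) (u i) (v i) ξ) :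
    HasWirtingerAt (fun z => ∑ i ∈ s, G i z) (∑ i ∈ s, u i) (∑ i ∈ s, v i) ξ := by
  refine (HasFDerivAt.fun_sum h).congr_fderiv ?_
  ext w; simp [Finset.smul_sum, Finset.sum_add_distrib]

theorem inv {c : ℂ → ℂ} {a b : ℂ} (hc : HasWirtingerAt c a b ξ) (h0 : c ξ ≠ 0) :
    HasWirtingerAt (fun z => (c z)⁻¹) (-a / c ξ ^ 2) (-b / c ξ ^ 2) ξ := by
  refine (((hasDerivAt_inv h0).hasFDerivAt.restrictScalars ℝ).comp ξ hc).congr_fderiv ?_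
  ext w; simp; ring

theorem star {c : ℂ → ℂ} {a b : ℂ} (hc : HasWirtingerAt c a b ξ) :
    HasWirtingerAt (fun z => star (c z)) (star b) (star a) ξ := by
  refine (Complex.conjCLE.toContinuousLinearMap.hasFDerivAt.comp ξ hc).congr_fderiv ?_
  ext w; simp; ring

end HasWirtingerAt

theorem hasWirtingerAt_const (c : E) (ξ : ℂ) : HasWirtingerAt (fun _ => c) 0 0 ξ :=
  (hasFDerivAt_const c ξ).congr_fderiv (by ext w; simp)

theorem HasDerivAt.hasWirtingerAt {G : ℂ → E} {d : E} {ξ : ℂ} (h : HasDerivAt G d ξ) :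
    HasWirtingerAt G d 0 ξ :=
  (h.hasFDerivAt.restrictScalars ℝ).congr_fderiv (by ext w; simp)

theorem HasWirtingerAt.smul_const {c : ℂ → ℂ} {a b ξ : ℂ} (hc : HasWirtingerAt c a b ξ)
    (x : E) :
    HasWirtingerAt (fun z => c z • x) (a • x) (b • x) ξ :=
  (hc.smul (hasWirtingerAt_const x ξ)).congr (by simp) (by simp)

theorem hasWirtingerAt_matrix {m n : Type*} [Fintype m] [Fintype n] [DecidableEq m]
    [DecidableEq n] {G : ℂ → Matrix m n ℂ} {U V : Matrix m n ℂ} {ξ : ℂ}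
    (h : ∀ i j, HasWirtingerAt (fun z => G z i j) (U i j) (V i j) ξ) :
    HasWirtingerAt G U V ξ := by
  have expand (M : Matrix m n ℂ) : M = ∑ i, ∑ j, M i j • single i j (1 : ℂ) := by
    simpa [smul_single] using matrix_eq_sum_single M
  rw [funext fun z => expand (G z), expand U, expand V]
  exact HasWirtingerAt.sum _ fun i _ => HasWirtingerAt.sum _ fun j _ => (h i j).smul_const _

theorem DifferentiableAt.hasDerivAt_wd {G : ℂ → E} {ξ : ℂ} (h : DifferentiableAt ℂ G ξ) :
    HasDerivAt G (wd G ξ) ξ :=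
  h.hasDerivAt.hasWirtingerAt.wd_eq.symm ▸ h.hasDerivAt

end Wirtinger

section RankOne

variable {R ι : Type*} [Fintype ι]

theorem vecMulVec_commutator_one_sub_projector [Field R] [StarRing R] [DecidableEq ι] {f w : ι → R}
    (hA : star f ⬝ᵥ f ≠ 0) (hw : w ⬝ᵥ f = 0) :
    vecMulVec f w * (1 - (star f ⬝ᵥ f)⁻¹ • vecMulVec f (star f))
      - (1 - (star f ⬝ᵥ f)⁻¹ • vecMulVec f (star f)) * vecMulVec f w = vecMulVec f w := by
  rw [mul_sub, sub_mul, mul_one, one_mul, Matrix.mul_smul, Matrix.smul_mul,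
    vecMulVec_mul_vecMulVec, vecMulVec_mul_vecMulVec, hw, zero_smul, vecMulVec_smul, smul_smul,
    inv_mul_cancel₀ hA, one_smul]
  simp

theorem trace_conjTranspose_vecMulVec_mul_self [CommRing R] [StarRing R] {f w : ι → R}
    (hw : w ⬝ᵥ f = 0) :
    ((vecMulVec f w)ᴴ * (vecMulVec f w)ᴴ).trace = 0 := by
  simp [conjTranspose_vecMulVec, vecMulVec_mul_vecMulVec, star_dotProduct_star, hw]

theorem trace_conjTranspose_vecMulVec_mul_vecMulVec [CommRing R] [StarRing R]
    (f w : ι → R) :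
    ((vecMulVec f w)ᴴ * vecMulVec f w).trace = (star f ⬝ᵥ f) * (star w ⬝ᵥ w) := by
  simp [conjTranspose_vecMulVec, vecMulVec_mul_vecMulVec]

end RankOne

section Projector

variable {ι : Type*} [Fintype ι]

/-- `-∂̄(star f / (star f ⬝ᵥ f))` at a point where the holomorphic `f` has value `f` and
derivative `d`. -/
noncomputable def projDbarCovector (f d : ι → ℂ) : ι → ℂ :=
  ((star d ⬝ᵥ f) / (star f ⬝ᵥ f) ^ 2) • star f - (star f ⬝ᵥ f)⁻¹ • star d

theorem HasDerivAt.hasWirtingerAt_dotProduct_star_self {f : ℂ → ι → ℂ} {d : ι → ℂ} {ξ : ℂ}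
    (hf : HasDerivAt f d ξ) :
    HasWirtingerAt (fun z => star (f z) ⬝ᵥ f z) (star (f ξ) ⬝ᵥ d) (star d ⬝ᵥ f ξ) ξ := by
  have hfi i : HasWirtingerAt (fun z => f z i) (d i) 0 ξ := (hasDerivAt_pi.1 hf i).hasWirtingerAt
  refine (HasWirtingerAt.sum Finset.univ fun i _ => (hfi i).star.mul (hfi i)).congr ?_ ?_ <;>
    simp [dotProduct]

theorem wdbar_one_sub_projector [DecidableEq ι] {f : ℂ → ι → ℂ} {d : ι → ℂ} {ξ : ℂ}
    (hf : HasDerivAt f d ξ) (hA : star (f ξ) ⬝ᵥ f ξ ≠ 0) :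
    wdbar (fun z => 1 - (star (f z) ⬝ᵥ f z)⁻¹ • vecMulVec (f z) (star (f z))) ξ
      = vecMulVec (f ξ) (projDbarCovector (f ξ) d) := by
  have hfi i : HasWirtingerAt (fun z => f z i) (d i) 0 ξ := (hasDerivAt_pi.1 hf i).hasWirtingerAt
  have hinv := hf.hasWirtingerAt_dotProduct_star_self.inv hA
  have hP := hasWirtingerAt_matrix
    (G := fun z => 1 - (star (f z) ⬝ᵥ f z)⁻¹ • vecMulVec (f z) (star (f z))) fun i j =>
    (hinv.mul ((hfi i).mul (hfi j).star)).const_sub ((1 : Matrix ι ι ℂ) i j)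
  rw [hP.wdbar_eq]
  ext i j
  simp [projDbarCovector, vecMulVec_apply]
  field_simp
  ring

theorem projDbarCovector_dotProduct {f : ι → ℂ} (d : ι → ℂ) (hA : star f ⬝ᵥ f ≠ 0) :
    projDbarCovector f d ⬝ᵥ f = 0 := by
  simp only [projDbarCovector, sub_dotProduct, smul_dotProduct, smul_eq_mul]
  field_simp
  ring

theorem star_projDbarCovector_dotProduct_self_mul (f d : ι → ℂ) (hA : star f ⬝ᵥ f ≠ 0) :
    (star f ⬝ᵥ f) * (star (projDbarCovector f d) ⬝ᵥ projDbarCovector f d)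
      = ((star f ⬝ᵥ f) * (star d ⬝ᵥ d) - (star d ⬝ᵥ f) * (star f ⬝ᵥ d)) / (star f ⬝ᵥ f) ^ 2 := by
  have hAr : star (star f ⬝ᵥ f) = star f ⬝ᵥ f := (star_dotProduct f f).symm
  simp only [projDbarCovector, star_sub, star_smul, star_star, sub_dotProduct, dotProduct_sub,
    smul_dotProduct, dotProduct_smul, smul_eq_mul, star_div₀, star_inv₀, star_pow, hAr]
  rw [← star_dotProduct, dotProduct_comm f, dotProduct_comm d, dotProduct_comm f,
    dotProduct_comm d]
  field_simp
  ring

end Projector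

theorem lagrange_identity_fin_three (f d : Fin 3 → ℂ) :
    (star f ⬝ᵥ f) * (star d ⬝ᵥ d) - (star d ⬝ᵥ f) * (star f ⬝ᵥ d)
      = ((normSq (f 0 * d 1 - f 1 * d 0) + normSq (f 0 * d 2 - f 2 * d 0)
          + normSq (f 1 * d 2 - f 2 * d 1) : ℝ) : ℂ) := by
  simp only [ofReal_add, normSq_eq_conj_mul_self, dotProduct, Fin.sum_univ_three, Pi.star_apply,
    star_def, map_sub, map_mul]
  ring

/-- Conformality for holomorphic solutions of the `ℂP²` model: with `f = (1, W₁, W₂)`,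
`A = 1 + |W₁|² + |W₂|²`, `P = 1₃ − (f·fᴴ)/A` and `K = [∂̄P, P]`, one has
`tr(KᴴKᴴ) = 0` and `tr(KᴴK) = (|∂W₁|² + |∂W₂|² + |W₁∂W₂ − W₂∂W₁|²)/A²`. -/
theorem conformality_holomorphic_CP2 (Ω : Set ℂ) (hΩ : IsOpen Ω)
    (W₁ W₂ : ℂ → ℂ) (hW₁ : DifferentiableOn ℂ W₁ Ω) (hW₂ : DifferentiableOn ℂ W₂ Ω)
    (A : ℂ → ℝ) (hA : A = fun ξ => 1 + Complex.normSq (W₁ ξ) + Complex.normSq (W₂ ξ))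
    (f : ℂ → Fin 3 → ℂ) (hf : f = fun ξ => ![1, W₁ ξ, W₂ ξ])
    (P : ℂ → Matrix (Fin 3) (Fin 3) ℂ)
    (hP : P = fun ξ => 1 - ((A ξ : ℂ))⁻¹ • Matrix.vecMulVec (f ξ) (star (f ξ)))
    (K : ℂ → Matrix (Fin 3) (Fin 3) ℂ)
    (hK : K = fun ξ => wdbar P ξ * P ξ - P ξ * wdbar P ξ) :
    ∀ ξ ∈ Ω,
      ((K ξ)ᴴ * (K ξ)ᴴ).trace = 0 ∧
      ((K ξ)ᴴ * K ξ).trace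
        = ((Complex.normSq (wd W₁ ξ) + Complex.normSq (wd W₂ ξ)
            + Complex.normSq (W₁ ξ * wd W₂ ξ - W₂ ξ * wd W₁ ξ) : ℝ) : ℂ)
          / ((A ξ : ℂ)) ^ 2 := by
  intro ξ hξ
  set d : Fin 3 → ℂ := ![0, wd W₁ ξ, wd W₂ ξ] with hd
  have hfd : HasDerivAt f d ξ := by
    refine hf ▸ hasDerivAt_pi.2 fun i => ?_
    fin_cases i
    exacts [hasDerivAt_const ξ 1, (hW₁.differentiableAt (hΩ.mem_nhds hξ)).hasDerivAt_wd,
      (hW₂.differentiableAt (hΩ.mem_nhds hξ)).hasDerivAt_wd]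
  have hAf (z : ℂ) : (A z : ℂ) = star (f z) ⬝ᵥ f z := by
    simp [hA, hf, normSq_eq_conj_mul_self, dotProduct, Fin.sum_univ_three]
  have hA0 : star (f ξ) ⬝ᵥ f ξ ≠ 0 := by
    rw [← hAf, hA]
    exact_mod_cast (add_pos_of_pos_of_nonneg (add_pos_of_pos_of_nonneg one_pos
      (normSq_nonneg _)) (normSq_nonneg _)).ne'
  have hw := projDbarCovector_dotProduct d hA0
  have hKξ : K ξ = vecMulVec (f ξ) (projDbarCovector (f ξ) d) := by
    simp only [hK, hP, hAf]
    rw [wdbar_one_sub_projector hfd hA0]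
    exact vecMulVec_commutator_one_sub_projector hA0 hw
  refine ⟨hKξ ▸ trace_conjTranspose_vecMulVec_mul_self hw, ?_⟩
  rw [hKξ, trace_conjTranspose_vecMulVec_mul_vecMulVec,
    star_projDbarCovector_dotProduct_self_mul _ _ hA0, lagrange_identity_fin_three, ← hAf]
  simp [hf, hd]
end

section
/- For all w₁, w₂ ∈ ℂ, setting A = 1 + |w₁|² + |w₂|² and X₁ = (w₁+conj(w₁))/A, X₂ = −i(w₁−conj(w₁))/A, X₃ = 2|w₁|²/A − 1, X₄ = 2|w₂|²/A − 1, X₅ = −i(w₂−conj(w₂))/A, X₆ = −i(conj(w₁)w₂ − conj(w₂)w₁)/A, X₇ = (conj(w₁)w₂ + conj(w₂)w₁)/A, X₈ = (w₂+conj(w₂))/A (all of which are real), one has X₁² + X₂² + X₃² + X₄² + X₅² + 2X₆² + 2X₇² + X₈² = 2. Hence the surface in ℝ⁸ obtained from any holomorphic solution (W₁, W₂) of the ℂP² sigma model via the generalized Weierstrass formula lies, after shifting X₃ and X₄ by constants, on a hyperellipsoid. -/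
open Complex

/-- The surface obtained from a holomorphic solution of the `ℂP²` model lies (after
shifting `X₃`, `X₄` by constants) on a hyperellipsoid: with `A = 1 + |w₁|² + |w₂|²`,
the listed real quantities satisfy
`X₁² + X₂² + X₃² + X₄² + X₅² + 2X₆² + 2X₇² + X₈² = 2`. -/
theorem CP2_holomorphic_surface_on_hyperellipsoid (w₁ w₂ : ℂ)
    (A : ℂ) (hA : A = 1 + (Complex.normSq w₁ : ℂ) + (Complex.normSq w₂ : ℂ))
    (X₁ X₂ X₃ X₄ X₅ X₆ X₇ X₈ : ℂ)
    (h₁ : X₁ = (w₁ + (starRingEnd ℂ) w₁) / A)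
    (h₂ : X₂ = -Complex.I * (w₁ - (starRingEnd ℂ) w₁) / A)
    (h₃ : X₃ = 2 * (Complex.normSq w₁ : ℂ) / A - 1)
    (h₄ : X₄ = 2 * (Complex.normSq w₂ : ℂ) / A - 1)
    (h₅ : X₅ = -Complex.I * (w₂ - (starRingEnd ℂ) w₂) / A)
    (h₆ : X₆ = -Complex.I * ((starRingEnd ℂ) w₁ * w₂ - (starRingEnd ℂ) w₂ * w₁) / A)
    (h₇ : X₇ = ((starRingEnd ℂ) w₁ * w₂ + (starRingEnd ℂ) w₂ * w₁) / A)
    (h₈ : X₈ = (w₂ + (starRingEnd ℂ) w₂) / A) :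
    X₁.im = 0 ∧ X₂.im = 0 ∧ X₃.im = 0 ∧ X₄.im = 0 ∧ X₅.im = 0 ∧ X₆.im = 0 ∧
    X₇.im = 0 ∧ X₈.im = 0 ∧
    X₁ ^ 2 + X₂ ^ 2 + X₃ ^ 2 + X₄ ^ 2 + X₅ ^ 2 + 2 * X₆ ^ 2 + 2 * X₇ ^ 2 + X₈ ^ 2 = 2 := by
  have hAre : A.re = 1 + Complex.normSq w₁ + Complex.normSq w₂ := by
    rw [hA]; simp
  have hA0 : A ≠ 0 := by
    intro h
    have : A.re = 0 := by rw [h]; simp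
    rw [hAre] at this
    nlinarith [Complex.normSq_nonneg w₁, Complex.normSq_nonneg w₂]
  have hAc : (starRingEnd ℂ) A = A := by
    rw [hA]; simp
  have him : ∀ z : ℂ, (starRingEnd ℂ) z = z → z.im = 0 := by
    intro z hz
    have := Complex.conj_eq_iff_im.mp hz
    exact this
  refine ⟨him _ ?_, him _ ?_, him _ ?_, him _ ?_, him _ ?_, him _ ?_, him _ ?_, him _ ?_, ?_⟩
  · rw [h₁]; simp [map_div₀, hAc]; ring
  · rw [h₂]; simp [map_div₀, hAc]; ring
  · rw [h₃]; simp [map_div₀, hAc, map_ofNat]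
  · rw [h₄]; simp [map_div₀, hAc, map_ofNat]
  · rw [h₅]; simp [map_div₀, hAc]; ring
  · rw [h₆]; simp [map_div₀, hAc]; ring
  · rw [h₇]; simp [map_div₀, hAc]; ring
  · rw [h₈]; simp [map_div₀, hAc]; ring
  · rw [h₁, h₂, h₃, h₄, h₅, h₆, h₇, h₈]
    rw [← Complex.mul_conj w₁, ← Complex.mul_conj w₂] at hA ⊢
    field_simp
    ring_nf
    simp only [Complex.I_sq]
    rw [hA]
    ring
end

section
/- Let a > 0 be a real number and define K_a : ℂ → ℝ by K_a(ξ) = −4 + 8a²·(1 + a²|ξ|² + |ξ|⁴)³/(a² + 4|ξ|² + a²|ξ|⁴)³. Then K_a is a constant function on ℂ if and only if a = √2; in that case K_a ≡ −2. -/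
open Complex

/-!
At `|ξ| = 1` the bases of the two cubes are `a² + 2` and `2(a² + 2)`, so `K_a = a² - 4` there,
while `K_a(0) = 8/a⁴ - 4`; a constant `K_a` thus forces `a⁶ = 8`. Conversely, for `a² = 2` both
bases are multiples of `(1 + |ξ|²)²` and the ratio is constant.
-/

noncomputable def curvature (a : ℝ) (ξ : ℂ) : ℝ :=
  -4 + 8 * a ^ 2 * (1 + a ^ 2 * ‖ξ‖ ^ 2 + ‖ξ‖ ^ 4) ^ 3
    / (a ^ 2 + 4 * ‖ξ‖ ^ 2 + a ^ 2 * ‖ξ‖ ^ 4) ^ 3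

lemma curvature_zero {a : ℝ} (ha : a ≠ 0) : curvature a 0 = -4 + 8 / a ^ 4 := by
  simp only [curvature, norm_zero]
  field_simp
  ring

lemma curvature_of_norm_eq_one (a : ℝ) {ξ : ℂ} (hξ : ‖ξ‖ = 1) : curvature a ξ = -4 + a ^ 2 := by
  have hpos : (0 : ℝ) < a ^ 2 + 2 := by positivity
  simp only [curvature, hξ]
  field_simp
  ring

lemma curvature_sqrt_two (ξ : ℂ) : curvature (Real.sqrt 2) ξ = -2 := by
  have hpos : (0 : ℝ) < 1 + ‖ξ‖ ^ 2 := by positivity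
  have hden : (2 : ℝ) + 4 * ‖ξ‖ ^ 2 + 2 * ‖ξ‖ ^ 4 = 2 * (1 + ‖ξ‖ ^ 2) ^ 2 := by ring
  have hnum : (1 : ℝ) + 2 * ‖ξ‖ ^ 2 + ‖ξ‖ ^ 4 = (1 + ‖ξ‖ ^ 2) ^ 2 := by ring
  rw [curvature, Real.sq_sqrt zero_le_two, hden, hnum]
  field_simp
  ring

lemma eq_sqrt_two_of_curvature_zero_eq_one {a : ℝ} (ha : 0 < a)
    (h : curvature a 0 = curvature a 1) : a = Real.sqrt 2 := by
  rw [curvature_zero ha.ne', curvature_of_norm_eq_one a norm_one] at h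
  have h6 : a ^ 6 = Real.sqrt 2 ^ 6 := by
    have : Real.sqrt 2 ^ 6 = 8 := by
      rw [show Real.sqrt 2 ^ 6 = (Real.sqrt 2 ^ 2) ^ 3 by ring, Real.sq_sqrt zero_le_two]
      norm_num
    rw [this]
    field_simp at h
    linear_combination -h
  exact (pow_left_inj₀ ha.le (Real.sqrt_nonneg 2) (by norm_num)).mp h6

/-- The Gaussian curvature
`K_a(ξ) = −4 + 8a²(1 + a²|ξ|² + |ξ|⁴)³/(a² + 4|ξ|² + a²|ξ|⁴)³` of the surface obtained
from the holomorphic `ℂP²` solution `W₁ = aξ`, `W₂ = ξ²` is constant iff `a = √2`, in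
which case it is identically `−2`. -/
theorem curvature_constant_iff_sqrt_two (a : ℝ) (ha : 0 < a)
    (K : ℂ → ℝ)
    (hK : K = fun ξ => -4 + 8 * a ^ 2
      * (1 + a ^ 2 * ‖ξ‖ ^ 2 + ‖ξ‖ ^ 4) ^ 3
      / (a ^ 2 + 4 * ‖ξ‖ ^ 2 + a ^ 2 * ‖ξ‖ ^ 4) ^ 3) :
    ((∃ c : ℝ, ∀ ξ : ℂ, K ξ = c) ↔ a = Real.sqrt 2) ∧
    (a = Real.sqrt 2 → ∀ ξ : ℂ, K ξ = -2) := by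
  change K = curvature a at hK
  subst hK
  have of_sqrt_two : a = Real.sqrt 2 → ∀ ξ : ℂ, curvature a ξ = -2 := by
    rintro rfl
    exact curvature_sqrt_two
  refine ⟨⟨?_, fun h => ⟨-2, of_sqrt_two h⟩⟩, of_sqrt_two⟩
  rintro ⟨c, hc⟩
  exact eq_sqrt_two_of_curvature_zero_eq_one ha ((hc 0).trans (hc 1).symm)
end
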